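/- arXiv:2507.08891 — 6 statements merged into one kernel-verified Lean document; each statement's English description precedes it below -/
import Mathlib

section
/- Let a, N : ℝ → ℝ be continuous and let F₀ : ℝ → ℝ be Lebesgue integrable with compact support. Define F(t,x) := exp(∫_0^t N(s) ds) · F₀(x − ∫_0^t a(s) ds) and, for n ∈ ℕ, the n-th moment Υⁿ(t) := ∫_ℝ xⁿ · F(t,x) dx. Then for every n ≥ 1 and every t ≥ 0, Υⁿ(t) = exp(∫_0^t N(s) ds) · Υⁿ(0) + n · ∫_0^t exp(∫_s^t N(r) dr) · a(s) · Υ^{n−1}(s) ds. -/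
/-!
Write `A(t) = ∫₀ᵗ a`, `E(t) = exp ∫₀ᵗ N` and `Mₙ(c) = ∫ (y + c)ⁿ F₀(y) dy`. The substitution
`x = y + A(t)` gives `Υⁿ(t) = E(t) Mₙ(A(t))`. Since `F₀` has compact support we may differentiate
under the integral sign, so `Mₙ' = n Mₙ₋₁`, and the fundamental theorem of calculus along `A` gives
`Mₙ(A(t)) = Mₙ(0) + n ∫₀ᵗ a(s) Mₙ₋₁(A(s)) ds`. Multiplying by `E(t) = exp(∫ₛᵗ N) E(s)` turns this
into the claimed Duhamel formula.
-/

open MeasureTheory Metric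

namespace MeasureTheory

theorem Integrable.continuous_mul_of_hasCompactSupport {μ : Measure ℝ} {f g : ℝ → ℝ}
    (hf : Integrable f μ) (hsupp : HasCompactSupport f) (hg : Continuous g) :
    Integrable (fun y => g y * f y) μ := by
  refine (integrableOn_iff_integrable_of_support_subset ?_).mp
    ((hf.locallyIntegrable.continuous_mul hg).integrableOn_isCompact hsupp.isCompact)
  exact (Function.support_mul_subset_right _ _).trans (subset_tsupport f)

end MeasureTheory

noncomputable def shiftedMoment (μ : Measure ℝ) (f : ℝ → ℝ) (n : ℕ) (c : ℝ) : ℝ :=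
  ∫ y, (y + c) ^ n * f y ∂μ

section ShiftedMoment

variable {μ : Measure ℝ} {f : ℝ → ℝ}

theorem hasDerivAt_shiftedMoment (hf : Integrable f μ) (hsupp : HasCompactSupport f)
    (n : ℕ) (c : ℝ) :
    HasDerivAt (shiftedMoment μ f n) (n * shiftedMoment μ f (n - 1) c) c := by
  obtain ⟨C, hC⟩ := (hsupp.isCompact.prod (isCompact_closedBall c 1)).exists_bound_of_continuousOn
    (f := fun p : ℝ × ℝ => (n : ℝ) * (p.1 + p.2) ^ (n - 1)) (by fun_prop)
  have hbound : ∀ y, ∀ x ∈ closedBall c 1,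
      ‖(n : ℝ) * (y + x) ^ (n - 1) * f y‖ ≤ C * ‖f y‖ := by
    intro y x hx
    by_cases hy : y ∈ tsupport f
    · rw [norm_mul]
      exact mul_le_mul_of_nonneg_right (hC (y, x) ⟨hy, hx⟩) (norm_nonneg _)
    · simp [image_eq_zero_of_notMem_tsupport hy]
  have key := hasDerivAt_integral_of_dominated_loc_of_deriv_le (μ := μ) (x₀ := c)
    (F := fun x y => (y + x) ^ n * f y) (F' := fun x y => (n : ℝ) * (y + x) ^ (n - 1) * f y)
    (closedBall_mem_nhds c one_pos)
    (Filter.Eventually.of_forall fun x =>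
      (by fun_prop : Continuous fun y : ℝ => (y + x) ^ n).aestronglyMeasurable.mul hf.1)
    (hf.continuous_mul_of_hasCompactSupport hsupp (by fun_prop))
    ((by fun_prop : Continuous fun y : ℝ => (n : ℝ) * (y + c) ^ (n - 1)).aestronglyMeasurable.mul
      hf.1)
    (Filter.Eventually.of_forall hbound) (hf.norm.const_mul C)
    (Filter.Eventually.of_forall fun y x _ => by
      simpa using ((hasDerivAt_id x).const_add y).pow n |>.mul_const (f y))
  unfold shiftedMoment
  simpa only [mul_assoc, integral_const_mul] using key.2

theorem continuous_shiftedMoment (hf : Integrable f μ) (hsupp : HasCompactSupport f) (n : ℕ) :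
    Continuous (shiftedMoment μ f n) :=
  continuous_iff_continuousAt.2 fun c => (hasDerivAt_shiftedMoment hf hsupp n c).continuousAt

theorem shiftedMoment_integral_eq (hf : Integrable f μ) (hsupp : HasCompactSupport f)
    {a : ℝ → ℝ} (ha : Continuous a) (n : ℕ) (t : ℝ) :
    shiftedMoment μ f n (∫ s in (0:ℝ)..t, a s) = shiftedMoment μ f n 0 +
      n * ∫ s in (0:ℝ)..t, a s * shiftedMoment μ f (n - 1) (∫ r in (0:ℝ)..s, a r) := by
  have hA : Continuous fun u => ∫ s in (0:ℝ)..u, a s :=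
    intervalIntegral.continuous_primitive (fun _ _ => ha.intervalIntegrable _ _) 0
  have hderiv : ∀ s ∈ Set.uIcc 0 t,
      HasDerivAt (fun u => shiftedMoment μ f n (∫ r in (0:ℝ)..u, a r))
        (n * (a s * shiftedMoment μ f (n - 1) (∫ r in (0:ℝ)..s, a r))) s := fun s _ =>
    ((hasDerivAt_shiftedMoment hf hsupp n _).comp s
      (ha.integral_hasStrictDerivAt 0 s).hasDerivAt).congr_deriv (by ring)
  have hcont : Continuous fun s => n * (a s * shiftedMoment μ f (n - 1) (∫ r in (0:ℝ)..s, a r)) :=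
    continuous_const.mul (ha.mul ((continuous_shiftedMoment hf hsupp _).comp hA))
  rw [← intervalIntegral.integral_const_mul,
    intervalIntegral.integral_eq_sub_of_hasDerivAt hderiv (hcont.intervalIntegrable _ _),
    intervalIntegral.integral_same]
  ring

end ShiftedMoment

theorem integral_pow_mul_comp_sub (f : ℝ → ℝ) (n : ℕ) (c : ℝ) :
    ∫ x, x ^ n * f (x - c) = shiftedMoment volume f n c := by
  simpa [shiftedMoment] using integral_sub_right_eq_self (fun x => (x + c) ^ n * f x) c

/-- the moments of the transport solution satisfy the recursion
`Υⁿ(t) = exp(∫_0^t N)·Υⁿ(0) + n·∫_0^t exp(∫_s^t N)·a(s)·Υ^{n−1}(s) ds`. -/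
theorem stmt_4 (a N : ℝ → ℝ) (ha : Continuous a) (hN : Continuous N)
    (F₀ : ℝ → ℝ) (hF₀ : Integrable F₀) (hsupp : HasCompactSupport F₀)
    (F : ℝ → ℝ → ℝ)
    (hF : ∀ t x : ℝ, F t x =
      Real.exp (∫ s in (0:ℝ)..t, N s) * F₀ (x - ∫ s in (0:ℝ)..t, a s))
    (Υ : ℕ → ℝ → ℝ)
    (hΥ : ∀ (n : ℕ) (t : ℝ), Υ n t = ∫ x : ℝ, x ^ n * F t x) :
    ∀ n : ℕ, 1 ≤ n → ∀ t : ℝ, 0 ≤ t →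
      Υ n t = Real.exp (∫ s in (0:ℝ)..t, N s) * Υ n 0 +
        (n : ℝ) * ∫ s in (0:ℝ)..t, Real.exp (∫ r in s..t, N r) * a s * Υ (n - 1) s := by
  intro n _ t _
  have hmoment : ∀ m u, Υ m u = Real.exp (∫ s in (0:ℝ)..u, N s) *
      shiftedMoment volume F₀ m (∫ s in (0:ℝ)..u, a s) := fun m u => by
    simp only [hΥ, hF, mul_left_comm _ (Real.exp _), integral_const_mul, integral_pow_mul_comp_sub]
  have hgrowth : ∀ s, Real.exp (∫ r in s..t, N r) * Real.exp (∫ r in (0:ℝ)..s, N r) =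
      Real.exp (∫ r in (0:ℝ)..t, N r) := fun s => by
    rw [← Real.exp_add, add_comm, intervalIntegral.integral_add_adjacent_intervals
      (hN.intervalIntegrable _ _) (hN.intervalIntegrable _ _)]
  have hduhamel : ∫ s in (0:ℝ)..t, Real.exp (∫ r in s..t, N r) * a s * Υ (n - 1) s =
      Real.exp (∫ r in (0:ℝ)..t, N r) *
        ∫ s in (0:ℝ)..t, a s * shiftedMoment volume F₀ (n - 1) (∫ r in (0:ℝ)..s, a r) := by
    rw [← intervalIntegral.integral_const_mul]
    refine intervalIntegral.integral_congr fun s _ => ?_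
    simp only [hmoment, ← hgrowth s]
    ring
  rw [hduhamel, hmoment n t, hmoment n 0, shiftedMoment_integral_eq hF₀ hsupp ha]
  simp only [intervalIntegral.integral_same, Real.exp_zero]
  ring
end

section
/- Let a, N : ℝ → ℝ be continuous and let F₀ : ℝ → ℝ be Lebesgue integrable with compact support. Define F(t,x) := exp(∫_0^t N(s) ds) · F₀(x − ∫_0^t a(s) ds), the moments Υⁿ(t) := ∫_ℝ xⁿ · F(t,x) dx, and the iterated integrals A₀(t) := 1 and A_k(t) := ∫_0^t a(s)·A_{k−1}(s) ds for k ≥ 1. Then for every n ∈ ℕ and every t ≥ 0, Υⁿ(t) = exp(∫_0^t N(s) ds) · Σ_{k=0}^{n} (n!/k!) · Υᵏ(0) · A_{n−k}(t). -/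
open MeasureTheory

/-- Auxiliary: the iterated integrals are powers of the primitive. -/
theorem auxA_pow (a : ℝ → ℝ) (ha : Continuous a) (A : ℕ → ℝ → ℝ)
    (hA0 : ∀ t : ℝ, A 0 t = 1)
    (hAk : ∀ (k : ℕ) (t : ℝ), A (k + 1) t = ∫ s in (0:ℝ)..t, a s * A k s) :
    ∀ (k : ℕ) (t : ℝ), A k t = (∫ s in (0:ℝ)..t, a s) ^ k / k.factorial := by
  intro k
  induction k with
  | zero => intro t; simp [hA0]
  | succ k ih =>
    intro t
    rw [hAk]
    have hderiv : ∀ x ∈ Set.uIcc (0:ℝ) t,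
        HasDerivAt (fun u => ∫ s in (0:ℝ)..u, a s) (a x) x := by
      intro x _
      exact intervalIntegral.integral_hasDerivAt_right (ha.intervalIntegrable _ _)
        (ha.stronglyMeasurableAtFilter _ _) ha.continuousAt
    have hg : Continuous (fun u : ℝ => u ^ k / (k.factorial : ℝ)) := by
      continuity
    have hsub := intervalIntegral.integral_comp_smul_deriv hderiv
      (ha.continuousOn) hg
    simp only [smul_eq_mul, Function.comp] at hsub
    have : (∫ s in (0:ℝ)..t, a s * A k s)
        = ∫ s in (0:ℝ)..t, a s * ((∫ u in (0:ℝ)..s, a u) ^ k / k.factorial) := by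
      apply intervalIntegral.integral_congr
      intro s _
      simp only [ih]
    rw [this, hsub]
    simp only [intervalIntegral.integral_same]
    rw [intervalIntegral.integral_div, integral_pow]
    rw [Nat.factorial_succ]
    push_cast
    field_simp
    try ring

theorem aux_int (F₀ : ℝ → ℝ) (hF₀ : Integrable F₀) (hsupp : HasCompactSupport F₀)
    (k : ℕ) : Integrable (fun x : ℝ => x ^ k * F₀ x) := by
  obtain ⟨C, hC⟩ := hsupp.isCompact.exists_bound_of_continuousOn
    (continuous_pow k).continuousOn
  refine Integrable.mono' (hF₀.norm.const_mul (max C 0)) ?_ ?_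
  · exact (measurable_id.pow_const k).aestronglyMeasurable.mul hF₀.aestronglyMeasurable
  · refine Filter.Eventually.of_forall fun x => ?_
    by_cases hx : F₀ x = 0
    · simp [hx, mul_nonneg (le_max_right C 0) (norm_nonneg _)]
    · have hxs : x ∈ tsupport F₀ := subset_tsupport _ hx
      have := hC x hxs
      calc ‖x ^ k * F₀ x‖ = ‖x ^ k‖ * ‖F₀ x‖ := norm_mul _ _
        _ ≤ max C 0 * ‖F₀ x‖ := by
            apply mul_le_mul_of_nonneg_right _ (norm_nonneg _)
            exact this.trans (le_max_left _ _)

/-- closed form for the moments of the transport solution: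
`Υⁿ(t) = exp(∫_0^t N) · Σ_{k=0}^{n} (n!/k!) · Υᵏ(0) · A_{n−k}(t)`. -/
theorem stmt_5 (a N : ℝ → ℝ) (ha : Continuous a) (hN : Continuous N)
    (F₀ : ℝ → ℝ) (hF₀ : Integrable F₀) (hsupp : HasCompactSupport F₀)
    (F : ℝ → ℝ → ℝ)
    (hF : ∀ t x : ℝ, F t x =
      Real.exp (∫ s in (0:ℝ)..t, N s) * F₀ (x - ∫ s in (0:ℝ)..t, a s))
    (Υ : ℕ → ℝ → ℝ)
    (hΥ : ∀ (n : ℕ) (t : ℝ), Υ n t = ∫ x : ℝ, x ^ n * F t x)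
    (A : ℕ → ℝ → ℝ)
    (hA0 : ∀ t : ℝ, A 0 t = 1)
    (hAk : ∀ (k : ℕ) (t : ℝ), A (k + 1) t = ∫ s in (0:ℝ)..t, a s * A k s) :
    ∀ (n : ℕ) (t : ℝ), 0 ≤ t →
      Υ n t = Real.exp (∫ s in (0:ℝ)..t, N s) *
        ∑ k ∈ Finset.range (n + 1),
          ((n.factorial : ℝ) / (k.factorial : ℝ)) * Υ k 0 * A (n - k) t := by
  intro n t ht
  set α : ℝ := ∫ s in (0:ℝ)..t, a s with hα
  set E : ℝ := Real.exp (∫ s in (0:ℝ)..t, N s) with hE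
  -- moments at time 0
  have hΥ0 : ∀ k : ℕ, Υ k 0 = ∫ x : ℝ, x ^ k * F₀ x := by
    intro k
    rw [hΥ]
    congr 1
    funext x
    rw [hF]
    simp
  -- main computation
  have step1 : Υ n t = E * ∫ x : ℝ, x ^ n * F₀ (x - α) := by
    rw [hΥ]
    rw [← integral_const_mul]
    congr 1
    funext x
    rw [hF]
    ring
  have step2 : (∫ x : ℝ, x ^ n * F₀ (x - α))
      = ∫ y : ℝ, (y + α) ^ n * F₀ y := by
    have := integral_sub_right_eq_self (μ := volume)
      (fun y : ℝ => (y + α) ^ n * F₀ y) α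
    rw [← this]
    congr 1
    funext x
    rw [sub_add_cancel]
  have hint : ∀ k : ℕ, Integrable
      (fun y : ℝ => y ^ k * α ^ (n - k) * (n.choose k : ℝ) * F₀ y) := by
    intro k
    have h := (aux_int F₀ hF₀ hsupp k).const_mul (α ^ (n - k) * (n.choose k : ℝ))
    exact h.congr (Filter.Eventually.of_forall fun y => by ring)
  have step3 : (∫ y : ℝ, (y + α) ^ n * F₀ y)
      = ∑ k ∈ Finset.range (n + 1),
          α ^ (n - k) * (n.choose k : ℝ) * ∫ y : ℝ, y ^ k * F₀ y := by
    have : (fun y : ℝ => (y + α) ^ n * F₀ y)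
        = fun y : ℝ => ∑ k ∈ Finset.range (n + 1),
            y ^ k * α ^ (n - k) * (n.choose k : ℝ) * F₀ y := by
      funext y
      rw [add_pow, Finset.sum_mul]
      try simp [mul_assoc]
    rw [this, integral_finset_sum _ (fun k _ => hint k)]
    refine Finset.sum_congr rfl fun k _ => ?_
    have hre : ∀ y : ℝ, y ^ k * α ^ (n - k) * (n.choose k : ℝ) * F₀ y
        = α ^ (n - k) * (n.choose k : ℝ) * (y ^ k * F₀ y) := fun y => by ring
    simp_rw [hre]
    rw [integral_const_mul]
  rw [step1, step2, step3]
  congr 1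
  refine Finset.sum_congr rfl fun k hk => ?_
  have hkn : k ≤ n := Nat.lt_succ_iff.mp (Finset.mem_range.mp hk)
  rw [auxA_pow a ha A hA0 hAk, hΥ0, ← hα]
  rw [Nat.cast_choose ℝ hkn]
  have h1 : (k.factorial : ℝ) ≠ 0 := Nat.cast_ne_zero.mpr k.factorial_ne_zero
  have h2 : ((n - k).factorial : ℝ) ≠ 0 := Nat.cast_ne_zero.mpr (n - k).factorial_ne_zero
  field_simp
end

section
/- Let a, N : ℝ → ℝ be continuous with 0 ≤ a(s) ≤ k_a and N(s) ≤ k_N for all s ≥ 0, and let F₀ : ℝ → ℝ be nonnegative, Lebesgue integrable, and supported in the interval [0, k_Υ] with k_Υ > 0. Define F(t,x) := exp(∫_0^t N(s) ds) · F₀(x − ∫_0^t a(s) ds) and Υⁿ(t) := ∫_ℝ xⁿ · F(t,x) dx. Then for every n ∈ ℕ and every t ≥ 0, Υⁿ(t) ≤ (∫_ℝ F₀) · exp(k_N·t) · (k_Υ + k_a·t)ⁿ. -/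
open MeasureTheory

/-- moment bound `Υⁿ(t) ≤ (∫ F₀) · exp(k_N·t) · (k_Υ + k_a·t)ⁿ`
for the transport solution with compactly supported nonnegative initial datum. -/
theorem stmt_7 (a N : ℝ → ℝ) (ha : Continuous a) (hN : Continuous N)
    (ka kN kΥ : ℝ) (hkΥ : 0 < kΥ)
    (haB : ∀ s : ℝ, 0 ≤ s → 0 ≤ a s ∧ a s ≤ ka)
    (hNB : ∀ s : ℝ, 0 ≤ s → N s ≤ kN)
    (F₀ : ℝ → ℝ) (hF₀pos : ∀ x : ℝ, 0 ≤ F₀ x) (hF₀int : Integrable F₀)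
    (hsupp : ∀ x : ℝ, x ∉ Set.Icc (0:ℝ) kΥ → F₀ x = 0)
    (F : ℝ → ℝ → ℝ)
    (hF : ∀ t x : ℝ, F t x =
      Real.exp (∫ s in (0:ℝ)..t, N s) * F₀ (x - ∫ s in (0:ℝ)..t, a s))
    (Υ : ℕ → ℝ → ℝ)
    (hΥ : ∀ (n : ℕ) (t : ℝ), Υ n t = ∫ x : ℝ, x ^ n * F t x) :
    ∀ (n : ℕ) (t : ℝ), 0 ≤ t →
      Υ n t ≤ (∫ x : ℝ, F₀ x) * Real.exp (kN * t) * (kΥ + ka * t) ^ n := by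
  intro n t ht
  set A : ℝ := ∫ s in (0:ℝ)..t, a s with hAdef
  have hka : 0 ≤ ka := le_trans (haB 0 le_rfl).1 (haB 0 le_rfl).2
  have hA0 : 0 ≤ A := by
    apply intervalIntegral.integral_nonneg ht
    intro s hs; exact (haB s hs.1).1
  have hAle : A ≤ ka * t := by
    have := intervalIntegral.integral_mono_on ht (ha.intervalIntegrable (μ := volume) 0 t)
      intervalIntegrable_const (g := fun _ => ka) (fun s hs => (haB s hs.1).2)
    simpa [mul_comm] using this
  have hNle : (∫ s in (0:ℝ)..t, N s) ≤ kN * t := by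
    have := intervalIntegral.integral_mono_on ht (hN.intervalIntegrable (μ := volume) 0 t)
      intervalIntegrable_const (g := fun _ => kN) (fun s hs => hNB s hs.1)
    simpa [mul_comm] using this
  set C : ℝ := kΥ + ka * t with hCdef
  have hC : 0 ≤ C := by positivity
  have hnn : ∀ y : ℝ, 0 ≤ (y + A) ^ n * F₀ y := by
    intro y
    by_cases hy : F₀ y = 0
    · simp [hy]
    · have hyI : y ∈ Set.Icc (0:ℝ) kΥ := by
        by_contra h; exact hy (hsupp y h)
      have : 0 ≤ y + A := add_nonneg hyI.1 hA0
      exact mul_nonneg (pow_nonneg this n) (hF₀pos y)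
  have hle : ∀ y : ℝ, (y + A) ^ n * F₀ y ≤ C ^ n * F₀ y := by
    intro y
    by_cases hy : F₀ y = 0
    · simp [hy]
    · have hyI : y ∈ Set.Icc (0:ℝ) kΥ := by
        by_contra h; exact hy (hsupp y h)
      have h1 : 0 ≤ y + A := add_nonneg hyI.1 hA0
      have h2 : y + A ≤ C := add_le_add hyI.2 hAle
      exact mul_le_mul_of_nonneg_right (pow_le_pow_left₀ h1 h2 n) (hF₀pos y)
  have key : (∫ x : ℝ, x ^ n * F₀ (x - A)) = ∫ y : ℝ, (y + A) ^ n * F₀ y := by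
    rw [← MeasureTheory.integral_sub_right_eq_self (fun y => (y + A) ^ n * F₀ y) A]
    simp
  have hbound : (∫ y : ℝ, (y + A) ^ n * F₀ y) ≤ C ^ n * ∫ x : ℝ, F₀ x := by
    calc (∫ y : ℝ, (y + A) ^ n * F₀ y) ≤ ∫ y : ℝ, C ^ n * F₀ y :=
          integral_mono_of_nonneg (ae_of_all _ hnn) (hF₀int.const_mul _)
            (ae_of_all _ hle)
      _ = C ^ n * ∫ x : ℝ, F₀ x := integral_const_mul _ _
  have hS0 : 0 ≤ ∫ y : ℝ, (y + A) ^ n * F₀ y := integral_nonneg hnn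
  have hΥeq : Υ n t = Real.exp (∫ s in (0:ℝ)..t, N s) * ∫ y : ℝ, (y + A) ^ n * F₀ y := by
    rw [hΥ, ← key, ← integral_const_mul]
    congr 1; funext x
    rw [hF]; ring
  rw [hΥeq]
  have hexp : Real.exp (∫ s in (0:ℝ)..t, N s) ≤ Real.exp (kN * t) :=
    Real.exp_le_exp.mpr hNle
  calc Real.exp (∫ s in (0:ℝ)..t, N s) * ∫ y : ℝ, (y + A) ^ n * F₀ y
      ≤ Real.exp (kN * t) * (C ^ n * ∫ x : ℝ, F₀ x) :=
        mul_le_mul hexp hbound hS0 (Real.exp_pos _).le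
    _ = (∫ x : ℝ, F₀ x) * Real.exp (kN * t) * (kΥ + ka * t) ^ n := by
        rw [hCdef]; ring
end

section
/- For every real p ≥ 1 there exist finite positive constants L_{aC}, L_{aH}, L_{NC}, L_{NH} such that for all C₁, C₂, H₁, H₂ ∈ ℝ the growth rate a and nucleation rate N satisfy |a(C₁,H₁) − a(C₂,H₂)|^{2p} ≤ L_{aC}·|C₁ − C₂|^p + L_{aH}·|H₁ − H₂|^p and |N(C₁,H₁) − N(C₂,H₂)|^{2p} ≤ L_{NC}·|C₁ − C₂|^p + L_{NH}·|H₁ − H₂|^p. -/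
/-!
Both rates have the form `k * F (C / C_sat H)` for a profile `F u = G (max (u - 1) 0)` with values
in `[0, 1]`, where `G v = tanh (v ^ 2)`, resp. `G v = exp (-δ / v ^ 2)` continued by `0` at `v = 0`.
Both profiles are flat at `u = 1` and saturate fast, so that `(1 + |u|) * |F' u| ≤ K`. The bound on
`F'` makes `F` Lipschitz, hence the rate Lipschitz in `C`; the bound on `u * F' u` makes
`t ↦ F (C * t)` Lipschitz on `[m, ∞)` uniformly in `C`. Since `P` is `K_CO2` times the sigmoid of
the upward parabola `q = K_a1 (H - K_a2) (H + K_a3)`, the derivative of `√(σ ∘ q)` is at most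
`exp (-q) * |q'| / 2`, which is bounded; so `1 / C_sat` is Lipschitz with values in some `[m, M]`,
`m > 0`. Hence `|Δ| ≤ A |ΔC| + B |ΔH|`, and together with `|Δ| ≤ k` this gives
`|Δ| ^ 2 ≤ k (A |ΔC| + B |ΔH|)`; raising to the power `p` costs a factor `2 ^ p`.
-/

open Real Set

lemma Real.hasDerivAt_tanh (x : ℝ) : HasDerivAt tanh (1 / cosh x ^ 2) x := by
  have h := (hasDerivAt_sinh x).div (hasDerivAt_cosh x) (cosh_pos x).ne'
  rw [← sq, ← sq, cosh_sq_sub_sinh_sq x] at h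
  have e : sinh / cosh = tanh := funext fun y => (tanh_eq_sinh_div_cosh y).symm
  rwa [e] at h

lemma hasDerivAt_max_zero_sq (x : ℝ) : HasDerivAt (fun y => max y 0 ^ 2) (2 * max x 0) x := by
  rcases lt_trichotomy x 0 with hx | rfl | hx
  · rw [max_eq_right hx.le, mul_zero]
    refine (hasDerivAt_const x 0).congr_of_eventuallyEq ?_
    filter_upwards [eventually_lt_nhds hx] with y hy
    simp [max_eq_right hy.le]
  · rw [max_self, mul_zero, ← hasDerivWithinAt_univ, ← Iic_union_Ici (a := (0 : ℝ))]
    refine HasDerivWithinAt.union ?_ ?_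
    · exact (hasDerivWithinAt_const 0 _ 0).congr
        (fun y hy => by simp [max_eq_right (mem_Iic.mp hy)]) (by simp)
    · exact ((hasDerivAt_pow 2 (0 : ℝ)).hasDerivWithinAt.congr
        (fun y hy => by simp [max_eq_left (mem_Ici.mp hy)]) (by simp)).congr_deriv (by simp)
  · rw [max_eq_left hx.le]
    have : HasDerivAt (fun y => y ^ 2) (2 * x) x := by simpa using hasDerivAt_pow 2 x
    refine this.congr_of_eventuallyEq ?_
    filter_upwards [eventually_gt_nhds hx] with y hy
    simp [max_eq_left hy.le]

lemma hasDerivAt_max_sub_one_sq (u : ℝ) :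
    HasDerivAt (fun u => max (u - 1) 0 ^ 2) (2 * max (u - 1) 0) u :=
  (hasDerivAt_max_zero_sq (u - 1)).comp_sub_const u 1

lemma hasDerivAt_expNegInvGlue (x : ℝ) :
    HasDerivAt expNegInvGlue (x⁻¹ ^ 2 * expNegInvGlue x) x := by
  simpa using expNegInvGlue.hasDerivAt_polynomial_eval_inv_mul 1 x

lemma expNegInvGlue_sq_div {δ v : ℝ} (hδ : 0 < δ) (hv : 0 ≤ v) :
    expNegInvGlue (v ^ 2 / δ) = if 0 < v then exp (-δ / v ^ 2) else 0 := by
  rcases hv.lt_or_eq with hv | rfl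
  · rw [if_pos hv, expNegInvGlue, if_neg (not_le.mpr (by positivity)), inv_div, neg_div]
  · simp

lemma one_sub_sigmoid_le_exp_neg (x : ℝ) : 1 - sigmoid x ≤ exp (-x) := by
  rw [← sigmoid_neg, sigmoid_def, neg_neg, exp_neg]
  exact inv_anti₀ (exp_pos x) (by linarith)

lemma exp_neg_quadratic_mul_abs_deriv_le {c : ℝ} (hc : 0 ≤ c) (α β H : ℝ) :
    exp (-(c * (H - α) * (H + β))) * |c * (2 * H + β - α)| ≤
      (1 + c) * exp (c * (α + β) ^ 2 / 4) := by
  set y := H + (β - α) / 2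
  have hq : -(c * (H - α) * (H + β)) = c * (α + β) ^ 2 / 4 - c * y ^ 2 := by ring
  have hq' : |c * (2 * H + β - α)| ≤ (1 + c) * exp (c * y ^ 2) := by
    have hy : c * (2 * H + β - α) = c * (2 * y) := by ring
    rw [hy, abs_mul, abs_of_nonneg hc, abs_mul, abs_two]
    calc c * (2 * |y|) ≤ (1 + c) * (1 + c * y ^ 2) := by
          nlinarith [sq_nonneg (|y| - 1), sq_abs y, mul_nonneg hc (sq_nonneg y)]
      _ ≤ (1 + c) * exp (c * y ^ 2) := by
          gcongr; linarith [add_one_le_exp (c * y ^ 2)]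
  calc exp (-(c * (H - α) * (H + β))) * |c * (2 * H + β - α)|
      ≤ exp (c * (α + β) ^ 2 / 4 - c * y ^ 2) * ((1 + c) * exp (c * y ^ 2)) := by
        rw [hq]; gcongr
    _ = (1 + c) * exp (c * (α + β) ^ 2 / 4) := by
        rw [mul_left_comm, ← exp_add]; ring_nf

lemma hasDerivAt_sqrt_sigmoid_quadratic (c α β H : ℝ) :
    HasDerivAt (fun H => √(sigmoid (c * (H - α) * (H + β))))
      (sigmoid (c * (H - α) * (H + β)) * (1 - sigmoid (c * (H - α) * (H + β))) *
        (c * (2 * H + β - α)) / (2 * √(sigmoid (c * (H - α) * (H + β))))) H := by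
  have hq : HasDerivAt (fun H => c * (H - α) * (H + β)) (c * (2 * H + β - α)) H :=
    ((((hasDerivAt_id' H).sub_const α).const_mul c).fun_mul
      ((hasDerivAt_id' H).add_const β)).congr_deriv (by ring)
  exact ((hasDerivAt_sigmoid _).comp H hq).sqrt (sigmoid_pos _).ne'

lemma abs_sqrt_sigmoid_quadratic_sub_le {c : ℝ} (hc : 0 ≤ c) (α β H₁ H₂ : ℝ) :
    |√(sigmoid (c * (H₁ - α) * (H₁ + β))) - √(sigmoid (c * (H₂ - α) * (H₂ + β)))| ≤
      (1 + c) * exp (c * (α + β) ^ 2 / 4) / 2 * |H₁ - H₂| := by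
  have hbound : ∀ H ∈ univ, ‖sigmoid (c * (H - α) * (H + β)) *
      (1 - sigmoid (c * (H - α) * (H + β))) * (c * (2 * H + β - α)) /
      (2 * √(sigmoid (c * (H - α) * (H + β))))‖ ≤ (1 + c) * exp (c * (α + β) ^ 2 / 4) / 2 := by
    intro H _
    set σ := sigmoid (c * (H - α) * (H + β))
    have hs0 : 0 < √σ := sqrt_pos.mpr (sigmoid_pos _)
    have hs1 : √σ ≤ 1 := sqrt_le_one.mpr (sigmoid_le_one _)
    have h1σ : 0 ≤ 1 - σ := sub_nonneg.mpr (sigmoid_le_one _)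
    calc ‖σ * (1 - σ) * (c * (2 * H + β - α)) / (2 * √σ)‖
        = ‖σ / √σ * ((1 - σ) * (c * (2 * H + β - α))) / 2‖ := by ring_nf
      _ = √σ * ((1 - σ) * |c * (2 * H + β - α)|) / 2 := by
          rw [div_sqrt, Real.norm_eq_abs, abs_div, abs_mul, abs_mul, abs_of_nonneg h1σ,
            abs_of_pos hs0, abs_two]
      _ ≤ 1 * (exp (-(c * (H - α) * (H + β))) * |c * (2 * H + β - α)|) / 2 := by
          gcongr; exact one_sub_sigmoid_le_exp_neg _
      _ ≤ (1 + c) * exp (c * (α + β) ^ 2 / 4) / 2 := by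
          rw [one_mul]
          exact div_le_div_of_nonneg_right (exp_neg_quadratic_mul_abs_deriv_le hc α β H)
            zero_le_two
  simpa using convex_univ.norm_image_sub_le_of_norm_hasDerivWithin_le
    (fun H _ => (hasDerivAt_sqrt_sigmoid_quadratic c α β H).hasDerivWithinAt) hbound
    (mem_univ H₂) (mem_univ H₁)

section ScaledProfile

variable {F F' : ℝ → ℝ} {K : ℝ}

lemma abs_sub_le_of_weighted_deriv_le (hF : ∀ u, HasDerivAt F (F' u) u)
    (hK : ∀ u, (1 + |u|) * |F' u| ≤ K) (x y : ℝ) : |F x - F y| ≤ K * |x - y| := by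
  have hF'K : ∀ u, ‖F' u‖ ≤ K := fun u =>
    le_trans (le_mul_of_one_le_left (abs_nonneg _) (by simp)) (hK u)
  simpa using convex_univ.norm_image_sub_le_of_norm_hasDerivWithin_le
    (fun u _ => (hF u).hasDerivWithinAt) (fun u _ => hF'K u) (mem_univ y) (mem_univ x)

lemma abs_comp_mul_sub_le_of_weighted_deriv_le (hF : ∀ u, HasDerivAt F (F' u) u)
    (hK : ∀ u, (1 + |u|) * |F' u| ≤ K) {m : ℝ} (hm : 0 < m) (C : ℝ) {t₁ t₂ : ℝ}
    (h₁ : m ≤ t₁) (h₂ : m ≤ t₂) : |F (C * t₁) - F (C * t₂)| ≤ K / m * |t₁ - t₂| := by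
  have hderiv : ∀ t, HasDerivAt (fun t => F (C * t)) (F' (C * t) * C) t := fun t =>
    (hF (C * t)).comp t (h := (C * ·)) (by simpa using (hasDerivAt_id t).const_mul C)
  have hK0 : 0 ≤ K := le_trans (by positivity) (hK 0)
  have hbound : ∀ t ∈ Ici m, ‖F' (C * t) * C‖ ≤ K / m := fun t ht => by
    have ht0 : 0 < t := hm.trans_le ht
    have : |F' (C * t) * C| * t ≤ K := by
      calc |F' (C * t) * C| * t = |C * t| * |F' (C * t)| := by
            rw [abs_mul, abs_mul, abs_of_pos ht0]; ring
        _ ≤ (1 + |C * t|) * |F' (C * t)| := by gcongr; linarith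
        _ ≤ K := hK _
    calc ‖F' (C * t) * C‖ ≤ K / t := (le_div_iff₀ ht0).mpr this
      _ ≤ K / m := div_le_div_of_nonneg_left hK0 hm ht
  simpa using (convex_Ici m).norm_image_sub_le_of_norm_hasDerivWithin_le
    (fun t _ => (hderiv t).hasDerivWithinAt) hbound h₂ h₁

lemma abs_comp_mul_sub_comp_mul_le_of_weighted_deriv_le (hF : ∀ u, HasDerivAt F (F' u) u)
    (hK : ∀ u, (1 + |u|) * |F' u| ≤ K) {s : ℝ → ℝ} {m M L : ℝ} (hm : 0 < m)
    (hs : ∀ H, s H ∈ Icc m M) (hsL : ∀ H₁ H₂, |s H₁ - s H₂| ≤ L * |H₁ - H₂|)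
    (C₁ C₂ H₁ H₂ : ℝ) :
    |F (C₁ * s H₁) - F (C₂ * s H₂)| ≤ K * M * |C₁ - C₂| + K / m * L * |H₁ - H₂| := by
  have hK0 : 0 ≤ K := le_trans (by positivity) (hK 0)
  calc |F (C₁ * s H₁) - F (C₂ * s H₂)|
      ≤ |F (C₁ * s H₁) - F (C₂ * s H₁)| + |F (C₂ * s H₁) - F (C₂ * s H₂)| :=
        abs_sub_le _ _ _
    _ ≤ K * |C₁ * s H₁ - C₂ * s H₁| + K / m * |s H₁ - s H₂| := by
        gcongr
        · exact abs_sub_le_of_weighted_deriv_le hF hK _ _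
        · exact abs_comp_mul_sub_le_of_weighted_deriv_le hF hK hm C₂ (hs H₁).1 (hs H₂).1
    _ ≤ K * M * |C₁ - C₂| + K / m * L * |H₁ - H₂| := by
        rw [← sub_mul, abs_mul, abs_of_pos (hm.trans_le (hs H₁).1), mul_comm _ (s H₁),
          mul_assoc, mul_assoc]
        gcongr
        · exact (hs H₁).2
        · exact hsL H₁ H₂

end ScaledProfile

lemma rpow_two_mul_le_of_le_of_le {x D A B c h p : ℝ} (hx : 0 ≤ x) (hA : 0 ≤ A) (hB : 0 ≤ B)
    (hc : 0 ≤ c) (hh : 0 ≤ h) (hp : 0 ≤ p) (hxD : x ≤ D) (hxAB : x ≤ A * c + B * h) :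
    x ^ (2 * p) ≤ (2 * D * A) ^ p * c ^ p + (2 * D * B) ^ p * h ^ p := by
  have hD : 0 ≤ D := hx.trans hxD
  have hsq : x ^ 2 ≤ D * A * c + D * B * h := by nlinarith
  rw [rpow_mul hx, rpow_two, ← mul_rpow (by positivity) hc, ← mul_rpow (by positivity) hh]
  rcases le_total (D * A * c) (D * B * h) with hle | hle
  · calc (x ^ 2) ^ p ≤ (2 * D * B * h) ^ p := by gcongr; linarith
      _ ≤ _ := le_add_of_nonneg_left (by positivity)
  · calc (x ^ 2) ^ p ≤ (2 * D * A * c) ^ p := by gcongr; linarith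
      _ ≤ _ := le_add_of_nonneg_right (by positivity)

theorem exists_rpow_bound_of_scaled_profile {F F' : ℝ → ℝ} {K : ℝ}
    (hF : ∀ u, HasDerivAt F (F' u) u) (hK : ∀ u, (1 + |u|) * |F' u| ≤ K) (hK0 : 0 < K)
    (hF01 : ∀ u, F u ∈ Icc 0 1) {k : ℝ} (hk : 0 < k) {s : ℝ → ℝ} {m M L : ℝ} (hm : 0 < m)
    (hs : ∀ H, s H ∈ Icc m M) (hL : 0 < L) (hsL : ∀ H₁ H₂, |s H₁ - s H₂| ≤ L * |H₁ - H₂|)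
    {p : ℝ} (hp : 0 ≤ p) :
    ∃ LC LH : ℝ, 0 < LC ∧ 0 < LH ∧ ∀ C₁ C₂ H₁ H₂ : ℝ,
      |k * F (C₁ * s H₁) - k * F (C₂ * s H₂)| ^ (2 * p) ≤
        LC * |C₁ - C₂| ^ p + LH * |H₁ - H₂| ^ p := by
  have hM : 0 < M := hm.trans_le ((hs 0).1.trans (hs 0).2)
  refine ⟨(2 * k * (k * (K * M))) ^ p, (2 * k * (k * (K / m * L))) ^ p, by positivity,
    by positivity, fun C₁ C₂ H₁ H₂ => ?_⟩
  rw [← mul_sub, abs_mul, abs_of_pos hk]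
  have hle_one : |F (C₁ * s H₁) - F (C₂ * s H₂)| ≤ 1 :=
    abs_sub_le_of_nonneg_of_le (hF01 _).1 (hF01 _).2 (hF01 _).1 (hF01 _).2
  have hlip := abs_comp_mul_sub_comp_mul_le_of_weighted_deriv_le hF hK hm hs hsL C₁ C₂ H₁ H₂
  refine rpow_two_mul_le_of_le_of_le (by positivity) (by positivity) (by positivity)
    (abs_nonneg _) (abs_nonneg _) hp ?_ ?_
  · simpa using mul_le_mul_of_nonneg_left hle_one hk.le
  · nlinarith

lemma one_add_abs_mul_le_of_max_sub_one {G : ℝ → ℝ} {K : ℝ} (hG0 : G 0 = 0)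
    (hG : ∀ v, 0 < v → (2 + v) * |G v| ≤ K) (hK : 0 ≤ K) (u : ℝ) :
    (1 + |u|) * |G (max (u - 1) 0)| ≤ K := by
  rcases le_or_gt u 1 with hu | hu
  · simpa [max_eq_right (sub_nonpos.mpr hu), hG0] using hK
  · have := hG (u - 1) (sub_pos.mpr hu)
    rwa [max_eq_left (sub_pos.mpr hu).le, abs_of_pos (by linarith),
      show 1 + u = 2 + (u - 1) by ring]

noncomputable def growthProfile (u : ℝ) : ℝ := tanh (max (u - 1) 0 ^ 2)

noncomputable def nucleationProfile (δ u : ℝ) : ℝ := expNegInvGlue (max (u - 1) 0 ^ 2 / δ)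

lemma growthProfile_mem_Icc (u : ℝ) : growthProfile u ∈ Icc 0 1 := by
  rw [growthProfile, tanh_eq_sinh_div_cosh]
  exact ⟨div_nonneg (sinh_nonneg_iff.mpr (by positivity)) (cosh_pos _).le,
    (div_le_one (cosh_pos _)).mpr (sinh_lt_cosh _).le⟩

lemma nucleationProfile_mem_Icc (δ u : ℝ) : nucleationProfile δ u ∈ Icc 0 1 := by
  refine ⟨expNegInvGlue.nonneg _, ?_⟩
  rw [nucleationProfile, expNegInvGlue]
  split_ifs with h
  · exact zero_le_one
  · exact exp_le_one_iff.mpr (neg_nonpos.mpr (inv_nonneg.mpr (not_le.mp h).le))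

lemma hasDerivAt_growthProfile (u : ℝ) :
    HasDerivAt growthProfile (1 / cosh (max (u - 1) 0 ^ 2) ^ 2 * (2 * max (u - 1) 0)) u :=
  (hasDerivAt_tanh _).comp u (hasDerivAt_max_sub_one_sq u)

lemma hasDerivAt_nucleationProfile (δ u : ℝ) :
    HasDerivAt (nucleationProfile δ)
      ((max (u - 1) 0 ^ 2 / δ)⁻¹ ^ 2 * expNegInvGlue (max (u - 1) 0 ^ 2 / δ) *
        (2 * max (u - 1) 0 / δ)) u :=
  (hasDerivAt_expNegInvGlue _).comp u ((hasDerivAt_max_sub_one_sq u).div_const δ)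

lemma growthProfile_deriv_weighted_le (u : ℝ) :
    (1 + |u|) * |1 / cosh (max (u - 1) 0 ^ 2) ^ 2 * (2 * max (u - 1) 0)| ≤ 8 := by
  refine one_add_abs_mul_le_of_max_sub_one (G := fun v => 1 / cosh (v ^ 2) ^ 2 * (2 * v))
    (by simp) (fun v hv => ?_) (by norm_num) u
  have hcosh : (1 + v ^ 2 + (v ^ 2) ^ 2 / 2) / 2 ≤ cosh (v ^ 2) := by
    rw [cosh_eq]
    linarith [quadratic_le_exp_of_nonneg (sq_nonneg v), exp_pos (-v ^ 2)]
  have hc := cosh_pos (v ^ 2)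
  rw [abs_of_nonneg (by positivity), one_div_mul_eq_div, ← mul_div_assoc,
    div_le_iff₀ (by positivity)]
  nlinarith [sq_nonneg (v - 1), sq_nonneg v, mul_le_mul hcosh hcosh (by positivity) hc.le]

lemma nucleationProfile_deriv_weighted_le {δ : ℝ} (hδ : 0 < δ) (u : ℝ) :
    (1 + |u|) * |(max (u - 1) 0 ^ 2 / δ)⁻¹ ^ 2 * expNegInvGlue (max (u - 1) 0 ^ 2 / δ) *
        (2 * max (u - 1) 0 / δ)| ≤ 4 + 4 / δ := by
  refine one_add_abs_mul_le_of_max_sub_one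
    (G := fun v => (v ^ 2 / δ)⁻¹ ^ 2 * expNegInvGlue (v ^ 2 / δ) * (2 * v / δ))
    (by simp) (fun v hv => ?_) (by positivity) u
  set y := δ / v ^ 2 with hy
  have hy0 : 0 < y := by positivity
  have hE : expNegInvGlue (v ^ 2 / δ) = exp (-y) := by
    rw [expNegInvGlue, if_neg (not_le.mpr (by positivity)), inv_div]
  have hexp := quadratic_le_exp_of_nonneg hy0.le
  have h1 : y * exp (-y) ≤ 1 := by
    rw [exp_neg, ← div_eq_mul_inv, div_le_one (exp_pos y)]; linarith [sq_nonneg y]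
  have h2 : y ^ 2 * exp (-y) ≤ 2 := by
    rw [exp_neg, ← div_eq_mul_inv, div_le_iff₀ (exp_pos y)]; linarith
  have hweight : (2 + v) * ((v ^ 2 / δ)⁻¹ ^ 2 * (2 * v / δ)) ≤ 4 * y + 2 / δ * y ^ 2 := by
    have key : (2 + v) * ((v ^ 2 / δ)⁻¹ ^ 2 * (2 * v / δ)) = 4 * y / v + 2 * y := by
      rw [hy]; field_simp; ring
    have : 4 * y / v ≤ 2 * y + 2 / δ * y ^ 2 := by
      rw [hy, div_le_iff₀ hv]; field_simp
      nlinarith [sq_nonneg (v - 1), hδ]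
    linarith
  rw [hE, abs_of_nonneg (by positivity)]
  calc (2 + v) * ((v ^ 2 / δ)⁻¹ ^ 2 * exp (-y) * (2 * v / δ))
      = (2 + v) * ((v ^ 2 / δ)⁻¹ ^ 2 * (2 * v / δ)) * exp (-y) := by ring
    _ ≤ (4 * y + 2 / δ * y ^ 2) * exp (-y) := by gcongr
    _ = 4 * (y * exp (-y)) + 2 / δ * (y ^ 2 * exp (-y)) := by ring
    _ ≤ 4 * 1 + 2 / δ * 2 := by gcongr
    _ = 4 + 4 / δ := by ring

section SaturationFactor

variable {κ K c : ℝ}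

lemma one_add_mul_sqrt_sigmoid_div_mem_Icc (hκ : 0 ≤ κ) (hK : 0 < K) (x : ℝ) :
    (1 + κ * √(sigmoid x)) / K ∈ Icc K⁻¹ ((1 + κ) / K) := by
  have h0 : 0 ≤ √(sigmoid x) := sqrt_nonneg _
  have h1 : √(sigmoid x) ≤ 1 := sqrt_le_one.mpr (sigmoid_le_one x)
  rw [inv_eq_one_div]
  constructor <;> gcongr
  · nlinarith
  · nlinarith

lemma abs_one_add_mul_sqrt_sigmoid_quadratic_div_sub_le (hκ : 0 ≤ κ) (hK : 0 < K) (hc : 0 ≤ c)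
    (α β H₁ H₂ : ℝ) :
    |(1 + κ * √(sigmoid (c * (H₁ - α) * (H₁ + β)))) / K -
        (1 + κ * √(sigmoid (c * (H₂ - α) * (H₂ + β)))) / K| ≤
      κ / K * ((1 + c) * exp (c * (α + β) ^ 2 / 4) / 2) * |H₁ - H₂| := by
  rw [← sub_div, add_sub_add_left_eq_sub, ← mul_sub, abs_div, abs_mul, abs_of_nonneg hκ,
    abs_of_pos hK, mul_div_right_comm]
  exact (mul_le_mul_of_nonneg_left (abs_sqrt_sigmoid_quadratic_sub_le hc α β H₁ H₂)
    (div_nonneg hκ hK.le)).trans_eq (mul_assoc _ _ _).symm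

end SaturationFactor

theorem stmt_11_general (kg kN δ Ksp K1sat K2sat KCO2 Ka1 Ka2 Ka3 : ℝ)
    (hkg : 0 < kg) (hkN : 0 < kN) (hδ : 0 < δ) (hKsp : 0 < Ksp)
    (hK1 : 0 < K1sat) (hK2 : 0 < K2sat) (hKCO2 : 0 < KCO2)
    (hKa1 : 0 < Ka1)
    (P Csat : ℝ → ℝ) (Ct a N : ℝ → ℝ → ℝ)
    (hP : ∀ H : ℝ, P H = KCO2 / (1 + Real.exp (-Ka1 * (H - Ka2) * (H + Ka3))))
    (hCsat : ∀ H : ℝ, Csat H = K1sat / (1 + K2sat * Real.sqrt (P H / Ksp)))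
    (hCt : ∀ C H : ℝ, Ct C H = max (C / Csat H - 1) 0)
    (ha : ∀ C H : ℝ, a C H = kg * Real.tanh (Ct C H ^ 2))
    (hN : ∀ C H : ℝ,
      N C H = if 0 < Ct C H then kN * Real.exp (-δ / Ct C H ^ 2) else 0) :
    ∀ p : ℝ, 1 ≤ p →
      ∃ LaC LaH LNC LNH : ℝ,
        0 < LaC ∧ 0 < LaH ∧ 0 < LNC ∧ 0 < LNH ∧
        ∀ C₁ C₂ H₁ H₂ : ℝ,
          |a C₁ H₁ - a C₂ H₂| ^ (2 * p) ≤
            LaC * |C₁ - C₂| ^ p + LaH * |H₁ - H₂| ^ p ∧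
          |N C₁ H₁ - N C₂ H₂| ^ (2 * p) ≤
            LNC * |C₁ - C₂| ^ p + LNH * |H₁ - H₂| ^ p := by
  intro p hp
  have hp0 : 0 ≤ p := by linarith
  set κ := K2sat * √(KCO2 / Ksp)
  set s : ℝ → ℝ := fun H => (1 + κ * √(sigmoid (Ka1 * (H - Ka2) * (H + Ka3)))) / K1sat
  have hCsat_inv : ∀ H, (Csat H)⁻¹ = s H := fun H => by
    have hPσ : P H / Ksp = KCO2 / Ksp * sigmoid (Ka1 * (H - Ka2) * (H + Ka3)) := by
      rw [hP, sigmoid_def, neg_mul, neg_mul]; ring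
    rw [hCsat, inv_div, hPσ, sqrt_mul' _ (sigmoid_nonneg _), ← mul_assoc]
  have hs := fun H => one_add_mul_sqrt_sigmoid_div_mem_Icc (κ := κ) (by positivity) hK1
    (Ka1 * (H - Ka2) * (H + Ka3))
  have hsL := abs_one_add_mul_sqrt_sigmoid_quadratic_div_sub_le (κ := κ) (by positivity) hK1
    hKa1.le Ka2 Ka3
  have ha' : ∀ C H, a C H = kg * growthProfile (C * s H) := fun C H => by
    rw [ha, hCt, div_eq_mul_inv, hCsat_inv, growthProfile]
  have hN' : ∀ C H, N C H = kN * nucleationProfile δ (C * s H) := fun C H => by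
    rw [hN, hCt, div_eq_mul_inv, hCsat_inv, nucleationProfile,
      expNegInvGlue_sq_div hδ (le_max_right _ _), mul_ite, mul_zero]
  obtain ⟨LaC, LaH, hLaC, hLaH, hA⟩ := exists_rpow_bound_of_scaled_profile
    hasDerivAt_growthProfile growthProfile_deriv_weighted_le (by norm_num) growthProfile_mem_Icc
    hkg (inv_pos.mpr hK1) hs (by positivity) hsL hp0
  obtain ⟨LNC, LNH, hLNC, hLNH, hB⟩ := exists_rpow_bound_of_scaled_profile
    (hasDerivAt_nucleationProfile δ) (nucleationProfile_deriv_weighted_le hδ) (by positivity)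
    (nucleationProfile_mem_Icc δ) hkN (inv_pos.mpr hK1) hs (by positivity) hsL hp0
  refine ⟨LaC, LaH, LNC, LNH, hLaC, hLaH, hLNC, hLNH, fun C₁ C₂ H₁ H₂ => ?_⟩
  simp only [ha', hN']
  exact ⟨hA C₁ C₂ H₁ H₂, hB C₁ C₂ H₁ H₂⟩

/-- Hölder-power Lipschitz bounds for the growth rate `a` and
nucleation rate `N` of the precipitation model. -/
theorem stmt_11 (kg kN δ Ksp K1sat K2sat KCO2 Ka1 Ka2 Ka3 : ℝ)
    (hkg : 0 < kg) (hkN : 0 < kN) (hδ : 0 < δ) (hKsp : 0 < Ksp)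
    (hK1 : 0 < K1sat) (hK2 : 0 < K2sat) (hKCO2 : 0 < KCO2)
    (hKa1 : 0 < Ka1) (hKa2 : 0 < Ka2) (hKa3 : 0 < Ka3)
    (P Csat : ℝ → ℝ) (Ct a N : ℝ → ℝ → ℝ)
    (hP : ∀ H : ℝ, P H = KCO2 / (1 + Real.exp (-Ka1 * (H - Ka2) * (H + Ka3))))
    (hCsat : ∀ H : ℝ, Csat H = K1sat / (1 + K2sat * Real.sqrt (P H / Ksp)))
    (hCt : ∀ C H : ℝ, Ct C H = max (C / Csat H - 1) 0)
    (ha : ∀ C H : ℝ, a C H = kg * Real.tanh (Ct C H ^ 2))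
    (hN : ∀ C H : ℝ,
      N C H = if 0 < Ct C H then kN * Real.exp (-δ / Ct C H ^ 2) else 0) :
    ∀ p : ℝ, 1 ≤ p →
      ∃ LaC LaH LNC LNH : ℝ,
        0 < LaC ∧ 0 < LaH ∧ 0 < LNC ∧ 0 < LNH ∧
        ∀ C₁ C₂ H₁ H₂ : ℝ,
          |a C₁ H₁ - a C₂ H₂| ^ (2 * p) ≤
            LaC * |C₁ - C₂| ^ p + LaH * |H₁ - H₂| ^ p ∧
          |N C₁ H₁ - N C₂ H₂| ^ (2 * p) ≤
            LNC * |C₁ - C₂| ^ p + LNH * |H₁ - H₂| ^ p :=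
  stmt_11_general kg kN δ Ksp K1sat K2sat KCO2 Ka1 Ka2 Ka3 hkg hkN hδ hKsp hK1 hK2 hKCO2 hKa1 P Csat
    Ct a N hP hCsat hCt ha hN
end

section
/- In the coupled transport setting: for any two pairs of continuous functions (C¹,H¹) and (C²,H²) from [0,T] to ℝ, and for all t ∈ [0,T] and x ∈ ℝ, |F(C¹,H¹)(t,x) − F(C²,H²)(t,x)| ≤ k_{F₀}·exp(B_N·T)·T·(L_N + L_a)·( sup_{s∈[0,T]} |C¹(s) − C²(s)| + sup_{s∈[0,T]} |H¹(s) − H²(s)| ). -/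
/-!
Write `F(Cᵢ,Hᵢ)(t,x) = exp pᵢ · F₀(x - qᵢ)` with `pᵢ = ∫₀ᵗ N(Cᵢ,Hᵢ)` and `qᵢ = ∫₀ᵗ a(Cᵢ,Hᵢ)`.
Since `|pᵢ| ≤ B_N T`, the exponential is `exp (B_N T)`-Lipschitz on the relevant range, and `F₀`
is bounded and Lipschitz with constant `k_{F₀}`, so the difference is at most
`k_{F₀} exp (B_N T) (|p₁ - p₂| + |q₁ - q₂|)`. The Lipschitz bounds on `N` and `a` integrated over
`[0,t] ⊆ [0,T]` give `|p₁ - p₂| + |q₁ - q₂| ≤ (L_N + L_a) T (sup |C₁ - C₂| + sup |H₁ - H₂|)`;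
continuity on the compact interval makes these suprema finite, so `sSup` is the true supremum.
-/

open Set Real intervalIntegral MeasureTheory

lemma abs_exp_sub_exp_le_of_le {a b M : ℝ} (ha : a ≤ M) (hb : b ≤ M) :
    |exp a - exp b| ≤ exp M * |a - b| := by
  wlog hba : b ≤ a generalizing a b
  · rw [abs_sub_comm, abs_sub_comm a b]
    exact this hb ha (le_of_not_ge hba)
  have hsub : exp a - exp b ≤ exp a * (a - b) := by
    have hexp : exp b = exp a * exp (b - a) := by rw [← exp_add]; ring_nf
    nlinarith [add_one_le_exp (b - a), exp_pos a]
  rw [abs_of_nonneg (sub_nonneg.2 (exp_le_exp.2 hba)), abs_of_nonneg (sub_nonneg.2 hba)]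
  exact hsub.trans (mul_le_mul_of_nonneg_right (exp_le_exp.2 ha) (sub_nonneg.2 hba))

lemma abs_exp_mul_sub_exp_mul_le {F₀ : ℝ → ℝ} {k M p₁ p₂ q₁ q₂ : ℝ}
    (hb : ∀ x, |F₀ x| ≤ k) (hL : ∀ x y, |F₀ x - F₀ y| ≤ k * |x - y|)
    (hp₁ : p₁ ≤ M) (hp₂ : p₂ ≤ M) (x : ℝ) :
    |exp p₁ * F₀ (x - q₁) - exp p₂ * F₀ (x - q₂)| ≤ k * exp M * (|p₁ - p₂| + |q₁ - q₂|) := by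
  have hk : 0 ≤ k := (abs_nonneg _).trans (hb 0)
  have hF : |F₀ (x - q₁) - F₀ (x - q₂)| ≤ k * |q₁ - q₂| := by
    simpa [abs_sub_comm q₂] using hL (x - q₁) (x - q₂)
  calc |exp p₁ * F₀ (x - q₁) - exp p₂ * F₀ (x - q₂)|
      = |exp p₁ * (F₀ (x - q₁) - F₀ (x - q₂)) + (exp p₁ - exp p₂) * F₀ (x - q₂)| := by
        congr 1; ring
    _ ≤ exp p₁ * |F₀ (x - q₁) - F₀ (x - q₂)| + |exp p₁ - exp p₂| * |F₀ (x - q₂)| :=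
        (abs_add_le _ _).trans_eq (by rw [abs_mul, abs_mul, abs_of_pos (exp_pos p₁)])
    _ ≤ exp M * (k * |q₁ - q₂|) + exp M * |p₁ - p₂| * k := by
        gcongr
        exacts [abs_exp_sub_exp_le_of_le hp₁ hp₂, hb _]
    _ = k * exp M * (|p₁ - p₂| + |q₁ - q₂|) := by ring

section LipschitzInBothVariables

variable {f : ℝ → ℝ → ℝ} {L : ℝ}

lemma nonneg_of_abs_sub_le_mul (hf : ∀ c₁ h₁ c₂ h₂ : ℝ,
    |f c₁ h₁ - f c₂ h₂| ≤ L * (|c₁ - c₂| + |h₁ - h₂|)) : 0 ≤ L := by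
  have h := hf 1 0 0 0
  norm_num at h
  exact (abs_nonneg _).trans h

lemma continuous_uncurry_of_abs_sub_le_mul (hf : ∀ c₁ h₁ c₂ h₂ : ℝ,
    |f c₁ h₁ - f c₂ h₂| ≤ L * (|c₁ - c₂| + |h₁ - h₂|)) : Continuous (Function.uncurry f) := by
  have hL := nonneg_of_abs_sub_le_mul hf
  refine (LipschitzWith.of_dist_le_mul (K := (2 * L).toNNReal) fun p q => ?_).continuous
  rw [coe_toNNReal _ (by positivity), Prod.dist_eq, dist_eq, dist_eq, dist_eq]
  calc |f p.1 p.2 - f q.1 q.2| ≤ L * (|p.1 - q.1| + |p.2 - q.2|) := hf _ _ _ _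
    _ ≤ L * (2 * max |p.1 - q.1| |p.2 - q.2|) := by
        gcongr
        linarith [le_max_left |p.1 - q.1| |p.2 - q.2|, le_max_right |p.1 - q.1| |p.2 - q.2|]
    _ = 2 * L * max |p.1 - q.1| |p.2 - q.2| := by ring

lemma abs_integral_comp_sub_integral_comp_le (hf : ∀ c₁ h₁ c₂ h₂ : ℝ,
    |f c₁ h₁ - f c₂ h₂| ≤ L * (|c₁ - c₂| + |h₁ - h₂|))
    {C₁ H₁ C₂ H₂ : ℝ → ℝ} {t δC δH : ℝ} (ht : 0 ≤ t)
    (hC₁ : ContinuousOn C₁ (Icc 0 t)) (hH₁ : ContinuousOn H₁ (Icc 0 t))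
    (hC₂ : ContinuousOn C₂ (Icc 0 t)) (hH₂ : ContinuousOn H₂ (Icc 0 t))
    (hδC : ∀ s ∈ Icc 0 t, |C₁ s - C₂ s| ≤ δC) (hδH : ∀ s ∈ Icc 0 t, |H₁ s - H₂ s| ≤ δH) :
    |(∫ s in (0:ℝ)..t, f (C₁ s) (H₁ s)) - ∫ s in (0:ℝ)..t, f (C₂ s) (H₂ s)| ≤
      L * (δC + δH) * t := by
  have hL := nonneg_of_abs_sub_le_mul hf
  have hint : ∀ {C H : ℝ → ℝ}, ContinuousOn C (Icc 0 t) → ContinuousOn H (Icc 0 t) →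
      IntervalIntegrable (fun s => f (C s) (H s)) volume 0 t := fun hC hH =>
    ((continuous_uncurry_of_abs_sub_le_mul hf).comp_continuousOn
      (hC.prodMk hH)).intervalIntegrable_of_Icc ht
  rw [← integral_sub (hint hC₁ hH₁) (hint hC₂ hH₂)]
  have hpoint : ∀ s ∈ uIoc 0 t, ‖f (C₁ s) (H₁ s) - f (C₂ s) (H₂ s)‖ ≤ L * (δC + δH) := by
    intro s hs
    rw [uIoc_of_le ht] at hs
    have hs' : s ∈ Icc 0 t := Ioc_subset_Icc_self hs
    calc ‖f (C₁ s) (H₁ s) - f (C₂ s) (H₂ s)‖ ≤ L * (|C₁ s - C₂ s| + |H₁ s - H₂ s|) :=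
          (norm_eq_abs _).trans_le (hf _ _ _ _)
      _ ≤ L * (δC + δH) := by gcongr; exacts [hδC s hs', hδH s hs']
  simpa [abs_of_nonneg ht] using norm_integral_le_of_norm_le_const hpoint

end LipschitzInBothVariables

lemma abs_integral_le_of_abs_le {g : ℝ → ℝ} {B t : ℝ} (ht : 0 ≤ t) (hg : ∀ s, |g s| ≤ B) :
    |∫ s in (0:ℝ)..t, g s| ≤ B * t := by
  simpa [abs_of_nonneg ht] using norm_integral_le_of_norm_le_const (a := 0) (b := t)
    fun s _ => (norm_eq_abs (g s)).trans_le (hg s)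

theorem stmt_13_general (T BN La LN kF0 : ℝ)
    (a N : ℝ → ℝ → ℝ)
    (hNB : ∀ c h : ℝ, |N c h| ≤ BN)
    (haL : ∀ c₁ h₁ c₂ h₂ : ℝ, |a c₁ h₁ - a c₂ h₂| ≤ La * (|c₁ - c₂| + |h₁ - h₂|))
    (hNL : ∀ c₁ h₁ c₂ h₂ : ℝ, |N c₁ h₁ - N c₂ h₂| ≤ LN * (|c₁ - c₂| + |h₁ - h₂|))
    (F₀ : ℝ → ℝ)
    (hF0b : ∀ x : ℝ, |F₀ x| ≤ kF0)
    (hF0L : ∀ x y : ℝ, |F₀ x - F₀ y| ≤ kF0 * |x - y|)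
    (F : (ℝ → ℝ) → (ℝ → ℝ) → ℝ → ℝ → ℝ)
    (hF : ∀ (C H : ℝ → ℝ) (t x : ℝ), F C H t x =
      Real.exp (∫ s in (0:ℝ)..t, N (C s) (H s)) *
        F₀ (x - ∫ s in (0:ℝ)..t, a (C s) (H s)))
    (C₁ H₁ C₂ H₂ : ℝ → ℝ)
    (hC₁ : ContinuousOn C₁ (Set.Icc 0 T)) (hH₁ : ContinuousOn H₁ (Set.Icc 0 T))
    (hC₂ : ContinuousOn C₂ (Set.Icc 0 T)) (hH₂ : ContinuousOn H₂ (Set.Icc 0 T)) :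
    ∀ t ∈ Set.Icc (0:ℝ) T, ∀ x : ℝ,
      |F C₁ H₁ t x - F C₂ H₂ t x| ≤
        kF0 * Real.exp (BN * T) * T * (LN + La) *
          (sSup ((fun s => |C₁ s - C₂ s|) '' Set.Icc (0:ℝ) T) +
           sSup ((fun s => |H₁ s - H₂ s|) '' Set.Icc (0:ℝ) T)) := by
  intro t ht x
  set δC := sSup ((fun s => |C₁ s - C₂ s|) '' Icc (0:ℝ) T)
  set δH := sSup ((fun s => |H₁ s - H₂ s|) '' Icc (0:ℝ) T)
  have hδC : ∀ s ∈ Icc 0 T, |C₁ s - C₂ s| ≤ δC := fun s hs =>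
    le_csSup (isCompact_Icc.bddAbove_image (hC₁.sub hC₂).abs) (mem_image_of_mem _ hs)
  have hδH : ∀ s ∈ Icc 0 T, |H₁ s - H₂ s| ≤ δH := fun s hs =>
    le_csSup (isCompact_Icc.bddAbove_image (hH₁.sub hH₂).abs) (mem_image_of_mem _ hs)
  have hδ : 0 ≤ δC + δH :=
    add_nonneg ((abs_nonneg _).trans (hδC t ht)) ((abs_nonneg _).trans (hδH t ht))
  have hk : 0 ≤ kF0 := (abs_nonneg _).trans (hF0b 0)
  have hLNa : 0 ≤ LN + La :=
    add_nonneg (nonneg_of_abs_sub_le_mul hNL) (nonneg_of_abs_sub_le_mul haL)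
  have hN : ∀ C H : ℝ → ℝ, ∫ s in (0:ℝ)..t, N (C s) (H s) ≤ BN * T := fun C H =>
    (le_abs_self _).trans <| (abs_integral_le_of_abs_le ht.1 fun s => hNB _ _).trans <|
      mul_le_mul_of_nonneg_left ht.2 ((abs_nonneg _).trans (hNB 0 0))
  have hsub : Icc 0 t ⊆ Icc 0 T := Icc_subset_Icc_right ht.2
  have hΔN := abs_integral_comp_sub_integral_comp_le hNL ht.1 (hC₁.mono hsub) (hH₁.mono hsub)
    (hC₂.mono hsub) (hH₂.mono hsub) (fun s hs => hδC s (hsub hs)) (fun s hs => hδH s (hsub hs))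
  have hΔa := abs_integral_comp_sub_integral_comp_le haL ht.1 (hC₁.mono hsub) (hH₁.mono hsub)
    (hC₂.mono hsub) (hH₂.mono hsub) (fun s hs => hδC s (hsub hs)) (fun s hs => hδH s (hsub hs))
  have hΔ : LN * (δC + δH) * t + La * (δC + δH) * t ≤ (LN + La) * (δC + δH) * T := by
    rw [← add_mul, ← add_mul]
    gcongr
    exact ht.2
  rw [hF, hF]
  refine (abs_exp_mul_sub_exp_mul_le hF0b hF0L (hN C₁ H₁) (hN C₂ H₂) x).trans ?_
  calc _ ≤ kF0 * exp (BN * T) * ((LN + La) * (δC + δH) * T) := by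
        gcongr
        exact (add_le_add hΔN hΔa).trans hΔ
    _ = _ := by ring

/-- Lipschitz dependence of the coupled transport solution on the
driving trajectories `(C,H)`. -/
theorem stmt_13 (T Ba BN La LN kF0 : ℝ) (hT : 0 < T)
    (a N : ℝ → ℝ → ℝ)
    (haB : ∀ c h : ℝ, |a c h| ≤ Ba) (hNB : ∀ c h : ℝ, |N c h| ≤ BN)
    (haL : ∀ c₁ h₁ c₂ h₂ : ℝ, |a c₁ h₁ - a c₂ h₂| ≤ La * (|c₁ - c₂| + |h₁ - h₂|))
    (hNL : ∀ c₁ h₁ c₂ h₂ : ℝ, |N c₁ h₁ - N c₂ h₂| ≤ LN * (|c₁ - c₂| + |h₁ - h₂|))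
    (F₀ : ℝ → ℝ)
    (hF0b : ∀ x : ℝ, |F₀ x| ≤ kF0)
    (hF0L : ∀ x y : ℝ, |F₀ x - F₀ y| ≤ kF0 * |x - y|)
    (F : (ℝ → ℝ) → (ℝ → ℝ) → ℝ → ℝ → ℝ)
    (hF : ∀ (C H : ℝ → ℝ) (t x : ℝ), F C H t x =
      Real.exp (∫ s in (0:ℝ)..t, N (C s) (H s)) *
        F₀ (x - ∫ s in (0:ℝ)..t, a (C s) (H s)))
    (C₁ H₁ C₂ H₂ : ℝ → ℝ)
    (hC₁ : ContinuousOn C₁ (Set.Icc 0 T)) (hH₁ : ContinuousOn H₁ (Set.Icc 0 T))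
    (hC₂ : ContinuousOn C₂ (Set.Icc 0 T)) (hH₂ : ContinuousOn H₂ (Set.Icc 0 T)) :
    ∀ t ∈ Set.Icc (0:ℝ) T, ∀ x : ℝ,
      |F C₁ H₁ t x - F C₂ H₂ t x| ≤
        kF0 * Real.exp (BN * T) * T * (LN + La) *
          (sSup ((fun s => |C₁ s - C₂ s|) '' Set.Icc (0:ℝ) T) +
           sSup ((fun s => |H₁ s - H₂ s|) '' Set.Icc (0:ℝ) T)) :=
  stmt_13_general T BN La LN kF0 a N hNB haL hNL F₀ hF0b hF0L F hF C₁ H₁ C₂ H₂ hC₁ hH₁ hC₂ hH₂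
end

section
/- In the coupled transport setting, let L > 0, c₁ ≥ 0, c₂ ≥ 0, define S(C,H)(t) := ∫_0^L x² · F(C,H)(t,x) dx and the drift correction b(C,H)(t) := c₁ · a(C(t),H(t)) · S(C,H)(t) + c₂ · N(C(t),H(t)). Then (i) for every continuous C, H : [0,T] → ℝ and every t ∈ [0,T], |b(C,H)(t)| ≤ c₁·B_a·L³·exp(B_N·T)·k_{F₀} + c₂·B_N; and (ii) there exists a constant L_b > 0 such that for any two pairs (C¹,H¹), (C²,H²) of continuous functions and every t ∈ [0,T], |b(C¹,H¹)(t) − b(C²,H²)(t)| ≤ L_b · ( sup_{s∈[0,T]} |C¹(s) − C²(s)| + sup_{s∈[0,T]} |H¹(s) − H²(s)| ). -/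
/-!
The exponent satisfies `∫₀ᵗ N ≤ B_N T`, so `|F| ≤ e^{B_N T} k_{F₀}` and integrating against `x²`
over `[0, L]` gives `|S| ≤ L³ e^{B_N T} k_{F₀}`, whence (i). For (ii), `exp` is
`e^{B_N T}`-Lipschitz on `(-∞, B_N T]` and `F₀` is `k_{F₀}`-Lipschitz, while both integrals in the
definition of `F` move by at most `L_N T δ` and `L_a T δ` when `(C, H)` moves by `δ` in sup norm;
so `F`, then `S`, then `b` are Lipschitz in `(C, H)`.
-/

open Set Real

lemma abs_exp_sub_exp_le {x y M : ℝ} (hx : x ≤ M) (hy : y ≤ M) :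
    |exp x - exp y| ≤ exp M * |x - y| := by
  wlog hyx : y ≤ x generalizing x y
  · rw [abs_sub_comm, abs_sub_comm x]
    exact this hy hx (le_of_not_ge hyx)
  rw [abs_of_nonneg (sub_nonneg.2 (exp_le_exp.2 hyx)), abs_of_nonneg (sub_nonneg.2 hyx)]
  have h : exp x * (1 + (y - x)) ≤ exp y := by
    calc exp x * (1 + (y - x)) ≤ exp x * exp (y - x) := by gcongr; linarith [add_one_le_exp (y - x)]
      _ = exp y := by rw [← exp_add]; ring_nf
  calc exp x - exp y ≤ exp x * (x - y) := by linarith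
    _ ≤ exp M * (x - y) := mul_le_mul_of_nonneg_right (exp_le_exp.2 hx) (sub_nonneg.2 hyx)

lemma abs_exp_mul_sub_exp_mul_le_s15 {F₀ : ℝ → ℝ} {k I₁ I₂ u₁ u₂ M : ℝ}
    (hF₀ : ∀ x, |F₀ x| ≤ k) (hF₀L : ∀ x y, |F₀ x - F₀ y| ≤ k * |x - y|)
    (hI₁ : I₁ ≤ M) (hI₂ : I₂ ≤ M) :
    |exp I₁ * F₀ u₁ - exp I₂ * F₀ u₂| ≤ exp M * k * (|I₁ - I₂| + |u₁ - u₂|) := by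
  have hexp : |exp I₁ - exp I₂| * |F₀ u₁| ≤ exp M * |I₁ - I₂| * k :=
    mul_le_mul (abs_exp_sub_exp_le hI₁ hI₂) (hF₀ u₁) (abs_nonneg _) (by positivity)
  have hF : exp I₂ * |F₀ u₁ - F₀ u₂| ≤ exp M * (k * |u₁ - u₂|) :=
    mul_le_mul (exp_le_exp.2 hI₂) (hF₀L u₁ u₂) (abs_nonneg _) (exp_pos M).le
  calc |exp I₁ * F₀ u₁ - exp I₂ * F₀ u₂|
      = |(exp I₁ - exp I₂) * F₀ u₁ + exp I₂ * (F₀ u₁ - F₀ u₂)| := by ring_nf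
    _ ≤ |(exp I₁ - exp I₂) * F₀ u₁| + |exp I₂ * (F₀ u₁ - F₀ u₂)| := abs_add_le _ _
    _ = |exp I₁ - exp I₂| * |F₀ u₁| + exp I₂ * |F₀ u₁ - F₀ u₂| := by
      rw [abs_mul, abs_mul, abs_of_pos (exp_pos I₂)]
    _ ≤ exp M * k * (|I₁ - I₂| + |u₁ - u₂|) := by linarith

lemma abs_intervalIntegral_le_of_forall_mem_Icc {f : ℝ → ℝ} {B T t : ℝ}
    (hf : ∀ s ∈ Icc 0 T, |f s| ≤ B) (ht : t ∈ Icc 0 T) :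
    |∫ s in (0 : ℝ)..t, f s| ≤ B * T := by
  have hB : 0 ≤ B := (abs_nonneg _).trans (hf t ht)
  have hIoc : uIoc (0 : ℝ) t ⊆ Icc 0 T := by
    rw [uIoc_of_le ht.1]; exact Ioc_subset_Icc_self.trans (Icc_subset_Icc_right ht.2)
  calc |∫ s in (0 : ℝ)..t, f s| ≤ B * |t - 0| := by
        simpa only [Real.norm_eq_abs] using
          intervalIntegral.norm_integral_le_of_norm_le_const (f := f) fun s hs => hf s (hIoc hs)
    _ ≤ B * T := by rw [sub_zero, abs_of_nonneg ht.1]; exact mul_le_mul_of_nonneg_left ht.2 hB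

lemma abs_integral_sq_mul_le {f : ℝ → ℝ} {K L : ℝ} (hL : 0 ≤ L) (hf : ∀ x, |f x| ≤ K) :
    |∫ x in (0 : ℝ)..L, x ^ 2 * f x| ≤ L ^ 3 * K := by
  have hbound : ∀ x ∈ uIoc (0 : ℝ) L, ‖x ^ 2 * f x‖ ≤ L ^ 2 * K := by
    intro x hx
    rw [uIoc_of_le hL] at hx
    rw [Real.norm_eq_abs, abs_mul, abs_of_nonneg (sq_nonneg x)]
    exact mul_le_mul (pow_le_pow_left₀ hx.1.le hx.2 2) (hf x) (abs_nonneg _) (sq_nonneg L)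
  calc |∫ x in (0 : ℝ)..L, x ^ 2 * f x| ≤ L ^ 2 * K * |L - 0| := by
        simpa only [Real.norm_eq_abs] using
          intervalIntegral.norm_integral_le_of_norm_le_const hbound
    _ = L ^ 3 * K := by rw [sub_zero, abs_of_nonneg hL]; ring

lemma le_sSup_image_Icc_of_continuousOn {f : ℝ → ℝ} {a b s : ℝ} (hf : ContinuousOn f (Icc a b))
    (hs : s ∈ Icc a b) : f s ≤ sSup (f '' Icc a b) :=
  le_csSup (isCompact_Icc.bddAbove_image hf) (mem_image_of_mem f hs)

section LipschitzInTwoVariables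

variable {f : ℝ → ℝ → ℝ} {K : ℝ}

lemma nonneg_of_abs_sub_le_mul_add
    (hf : ∀ c₁ h₁ c₂ h₂ : ℝ, |f c₁ h₁ - f c₂ h₂| ≤ K * (|c₁ - c₂| + |h₁ - h₂|)) : 0 ≤ K :=
  (abs_nonneg _).trans (by simpa using hf 1 0 0 0)

lemma continuous_uncurry_of_abs_sub_le_mul_add
    (hf : ∀ c₁ h₁ c₂ h₂ : ℝ, |f c₁ h₁ - f c₂ h₂| ≤ K * (|c₁ - c₂| + |h₁ - h₂|)) :
    Continuous (Function.uncurry f) := by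
  have hK := nonneg_of_abs_sub_le_mul_add hf
  refine (LipschitzWith.of_dist_le' (K := 2 * K) fun p q => ?_).continuous
  have h₁ : |p.1 - q.1| ≤ dist p q := by rw [Prod.dist_eq, ← Real.dist_eq]; exact le_max_left _ _
  have h₂ : |p.2 - q.2| ≤ dist p q := by rw [Prod.dist_eq, ← Real.dist_eq]; exact le_max_right _ _
  rw [Real.dist_eq]
  calc |f p.1 p.2 - f q.1 q.2| ≤ K * (|p.1 - q.1| + |p.2 - q.2|) := hf _ _ _ _
    _ ≤ 2 * K * dist p q := by nlinarith

lemma intervalIntegrable_comp_of_abs_sub_le_mul_add {C H : ℝ → ℝ} {T t : ℝ}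
    (hf : ∀ c₁ h₁ c₂ h₂ : ℝ, |f c₁ h₁ - f c₂ h₂| ≤ K * (|c₁ - c₂| + |h₁ - h₂|))
    (hC : ContinuousOn C (Icc 0 T)) (hH : ContinuousOn H (Icc 0 T)) (ht : t ∈ Icc 0 T) :
    IntervalIntegrable (fun s => f (C s) (H s)) MeasureTheory.volume 0 t :=
  ((continuous_uncurry_of_abs_sub_le_mul_add hf).comp_continuousOn (hC.prodMk hH)).mono
    (uIcc_subset_Icc ⟨le_rfl, ht.1.trans ht.2⟩ ht) |>.intervalIntegrable

lemma abs_intervalIntegral_comp_sub_le {C₁ H₁ C₂ H₂ : ℝ → ℝ} {T t δ : ℝ}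
    (hf : ∀ c₁ h₁ c₂ h₂ : ℝ, |f c₁ h₁ - f c₂ h₂| ≤ K * (|c₁ - c₂| + |h₁ - h₂|))
    (hC₁ : ContinuousOn C₁ (Icc 0 T)) (hH₁ : ContinuousOn H₁ (Icc 0 T))
    (hC₂ : ContinuousOn C₂ (Icc 0 T)) (hH₂ : ContinuousOn H₂ (Icc 0 T))
    (hδ : ∀ s ∈ Icc 0 T, |C₁ s - C₂ s| + |H₁ s - H₂ s| ≤ δ) (ht : t ∈ Icc 0 T) :
    |(∫ s in (0 : ℝ)..t, f (C₁ s) (H₁ s)) - ∫ s in (0 : ℝ)..t, f (C₂ s) (H₂ s)| ≤ K * δ * T := by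
  rw [← intervalIntegral.integral_sub
    (intervalIntegrable_comp_of_abs_sub_le_mul_add hf hC₁ hH₁ ht)
    (intervalIntegrable_comp_of_abs_sub_le_mul_add hf hC₂ hH₂ ht)]
  exact abs_intervalIntegral_le_of_forall_mem_Icc (fun s hs =>
    (hf _ _ _ _).trans (mul_le_mul_of_nonneg_left (hδ s hs) (nonneg_of_abs_sub_le_mul_add hf))) ht

end LipschitzInTwoVariables

section Transport

variable (a N : ℝ → ℝ → ℝ) (F₀ : ℝ → ℝ)

noncomputable def transportSol (C H : ℝ → ℝ) (t x : ℝ) : ℝ :=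
  exp (∫ s in (0 : ℝ)..t, N (C s) (H s)) * F₀ (x - ∫ s in (0 : ℝ)..t, a (C s) (H s))

noncomputable def secondMoment (L : ℝ) (C H : ℝ → ℝ) (t : ℝ) : ℝ :=
  ∫ x in (0 : ℝ)..L, x ^ 2 * transportSol a N F₀ C H t x

noncomputable def driftCorrection (L c₁ c₂ : ℝ) (C H : ℝ → ℝ) (t : ℝ) : ℝ :=
  c₁ * a (C t) (H t) * secondMoment a N F₀ L C H t + c₂ * N (C t) (H t)

variable {a N F₀} {T Ba BN La LN kF0 L c₁ c₂ t δ : ℝ} {C H C₁ H₁ C₂ H₂ : ℝ → ℝ}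

lemma intervalIntegral_comp_le_mul (hNB : ∀ c h : ℝ, |N c h| ≤ BN) (ht : t ∈ Icc 0 T) :
    ∫ s in (0 : ℝ)..t, N (C s) (H s) ≤ BN * T :=
  (le_abs_self _).trans (abs_intervalIntegral_le_of_forall_mem_Icc (fun _ _ => hNB _ _) ht)

lemma abs_transportSol_le (hNB : ∀ c h : ℝ, |N c h| ≤ BN) (hF₀ : ∀ x, |F₀ x| ≤ kF0)
    (ht : t ∈ Icc 0 T) (x : ℝ) :
    |transportSol a N F₀ C H t x| ≤ exp (BN * T) * kF0 := by
  rw [transportSol, abs_mul, abs_of_pos (exp_pos _)]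
  exact mul_le_mul (exp_le_exp.2 (intervalIntegral_comp_le_mul hNB ht)) (hF₀ _) (abs_nonneg _)
    (exp_pos _).le

lemma continuous_transportSol (hF₀L : ∀ x y, |F₀ x - F₀ y| ≤ kF0 * |x - y|) :
    Continuous (transportSol a N F₀ C H t) :=
  continuous_const.mul
    ((LipschitzWith.of_dist_le' hF₀L).continuous.comp (continuous_id.sub continuous_const))

lemma abs_transportSol_sub_le (hNB : ∀ c h : ℝ, |N c h| ≤ BN)
    (haL : ∀ c₁ h₁ c₂ h₂ : ℝ, |a c₁ h₁ - a c₂ h₂| ≤ La * (|c₁ - c₂| + |h₁ - h₂|))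
    (hNL : ∀ c₁ h₁ c₂ h₂ : ℝ, |N c₁ h₁ - N c₂ h₂| ≤ LN * (|c₁ - c₂| + |h₁ - h₂|))
    (hF₀ : ∀ x, |F₀ x| ≤ kF0) (hF₀L : ∀ x y, |F₀ x - F₀ y| ≤ kF0 * |x - y|)
    (hC₁ : ContinuousOn C₁ (Icc 0 T)) (hH₁ : ContinuousOn H₁ (Icc 0 T))
    (hC₂ : ContinuousOn C₂ (Icc 0 T)) (hH₂ : ContinuousOn H₂ (Icc 0 T))
    (hδ : ∀ s ∈ Icc 0 T, |C₁ s - C₂ s| + |H₁ s - H₂ s| ≤ δ) (ht : t ∈ Icc 0 T) (x : ℝ) :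
    |transportSol a N F₀ C₁ H₁ t x - transportSol a N F₀ C₂ H₂ t x| ≤
      exp (BN * T) * kF0 * ((LN + La) * δ * T) := by
  have hk : 0 ≤ kF0 := (abs_nonneg _).trans (hF₀ 0)
  refine (abs_exp_mul_sub_exp_mul_le_s15 hF₀ hF₀L (intervalIntegral_comp_le_mul hNB ht)
    (intervalIntegral_comp_le_mul hNB ht)).trans (mul_le_mul_of_nonneg_left ?_ (by positivity))
  have hI := abs_intervalIntegral_comp_sub_le hNL hC₁ hH₁ hC₂ hH₂ hδ ht
  have hJ := abs_intervalIntegral_comp_sub_le haL hC₁ hH₁ hC₂ hH₂ hδ ht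
  rw [sub_sub_sub_cancel_left, abs_sub_comm (∫ s in (0 : ℝ)..t, a (C₂ s) (H₂ s))]
  linarith

lemma abs_secondMoment_le (hL : 0 ≤ L) (hNB : ∀ c h : ℝ, |N c h| ≤ BN)
    (hF₀ : ∀ x, |F₀ x| ≤ kF0) (ht : t ∈ Icc 0 T) :
    |secondMoment a N F₀ L C H t| ≤ L ^ 3 * exp (BN * T) * kF0 := by
  rw [mul_assoc]
  exact abs_integral_sq_mul_le hL (abs_transportSol_le hNB hF₀ ht)

lemma abs_secondMoment_sub_le (hL : 0 ≤ L) (hNB : ∀ c h : ℝ, |N c h| ≤ BN)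
    (haL : ∀ c₁ h₁ c₂ h₂ : ℝ, |a c₁ h₁ - a c₂ h₂| ≤ La * (|c₁ - c₂| + |h₁ - h₂|))
    (hNL : ∀ c₁ h₁ c₂ h₂ : ℝ, |N c₁ h₁ - N c₂ h₂| ≤ LN * (|c₁ - c₂| + |h₁ - h₂|))
    (hF₀ : ∀ x, |F₀ x| ≤ kF0) (hF₀L : ∀ x y, |F₀ x - F₀ y| ≤ kF0 * |x - y|)
    (hC₁ : ContinuousOn C₁ (Icc 0 T)) (hH₁ : ContinuousOn H₁ (Icc 0 T))
    (hC₂ : ContinuousOn C₂ (Icc 0 T)) (hH₂ : ContinuousOn H₂ (Icc 0 T))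
    (hδ : ∀ s ∈ Icc 0 T, |C₁ s - C₂ s| + |H₁ s - H₂ s| ≤ δ) (ht : t ∈ Icc 0 T) :
    |secondMoment a N F₀ L C₁ H₁ t - secondMoment a N F₀ L C₂ H₂ t| ≤
      L ^ 3 * (exp (BN * T) * kF0 * ((LN + La) * δ * T)) := by
  have hint : ∀ C H, IntervalIntegrable (fun x => x ^ 2 * transportSol a N F₀ C H t x)
      MeasureTheory.volume 0 L := fun C H =>
    ((continuous_pow 2).mul (continuous_transportSol hF₀L)).intervalIntegrable 0 L
  rw [secondMoment, secondMoment, ← intervalIntegral.integral_sub (hint C₁ H₁) (hint C₂ H₂)]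
  simp_rw [← mul_sub]
  exact abs_integral_sq_mul_le hL
    (abs_transportSol_sub_le hNB haL hNL hF₀ hF₀L hC₁ hH₁ hC₂ hH₂ hδ ht)

lemma abs_driftCorrection_le (hL : 0 ≤ L) (hc₁ : 0 ≤ c₁) (hc₂ : 0 ≤ c₂)
    (haB : ∀ c h : ℝ, |a c h| ≤ Ba) (hNB : ∀ c h : ℝ, |N c h| ≤ BN)
    (hF₀ : ∀ x, |F₀ x| ≤ kF0) (ht : t ∈ Icc 0 T) :
    |driftCorrection a N F₀ L c₁ c₂ C H t| ≤
      c₁ * Ba * (L ^ 3 * exp (BN * T) * kF0) + c₂ * BN := by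
  have hBa : 0 ≤ Ba := (abs_nonneg _).trans (haB 0 0)
  calc |driftCorrection a N F₀ L c₁ c₂ C H t|
      ≤ |c₁ * a (C t) (H t) * secondMoment a N F₀ L C H t| + |c₂ * N (C t) (H t)| :=
        abs_add_le _ _
    _ = c₁ * |a (C t) (H t)| * |secondMoment a N F₀ L C H t| + c₂ * |N (C t) (H t)| := by
        rw [abs_mul, abs_mul, abs_mul, abs_of_nonneg hc₁, abs_of_nonneg hc₂]
    _ ≤ c₁ * Ba * (L ^ 3 * exp (BN * T) * kF0) + c₂ * BN := by
        gcongr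
        exacts [haB _ _, abs_secondMoment_le hL hNB hF₀ ht, hNB _ _]

lemma abs_driftCorrection_sub_le (hL : 0 ≤ L) (hc₁ : 0 ≤ c₁) (hc₂ : 0 ≤ c₂)
    (haB : ∀ c h : ℝ, |a c h| ≤ Ba) (hNB : ∀ c h : ℝ, |N c h| ≤ BN)
    (haL : ∀ c₁ h₁ c₂ h₂ : ℝ, |a c₁ h₁ - a c₂ h₂| ≤ La * (|c₁ - c₂| + |h₁ - h₂|))
    (hNL : ∀ c₁ h₁ c₂ h₂ : ℝ, |N c₁ h₁ - N c₂ h₂| ≤ LN * (|c₁ - c₂| + |h₁ - h₂|))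
    (hF₀ : ∀ x, |F₀ x| ≤ kF0) (hF₀L : ∀ x y, |F₀ x - F₀ y| ≤ kF0 * |x - y|)
    (hC₁ : ContinuousOn C₁ (Icc 0 T)) (hH₁ : ContinuousOn H₁ (Icc 0 T))
    (hC₂ : ContinuousOn C₂ (Icc 0 T)) (hH₂ : ContinuousOn H₂ (Icc 0 T))
    (hδ : ∀ s ∈ Icc 0 T, |C₁ s - C₂ s| + |H₁ s - H₂ s| ≤ δ) (ht : t ∈ Icc 0 T) :
    |driftCorrection a N F₀ L c₁ c₂ C₁ H₁ t - driftCorrection a N F₀ L c₁ c₂ C₂ H₂ t| ≤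
      (c₁ * L ^ 3 * exp (BN * T) * kF0 * (La + Ba * (LN + La) * T) + c₂ * LN) * δ := by
  have hBa : 0 ≤ Ba := (abs_nonneg _).trans (haB 0 0)
  have hLa := nonneg_of_abs_sub_le_mul_add haL
  have hδ₀ : 0 ≤ δ := (add_nonneg (abs_nonneg _) (abs_nonneg _)).trans (hδ t ht)
  unfold driftCorrection
  set a₁ := a (C₁ t) (H₁ t)
  set a₂ := a (C₂ t) (H₂ t)
  set S₁ := secondMoment a N F₀ L C₁ H₁ t
  set S₂ := secondMoment a N F₀ L C₂ H₂ t
  set N₁ := N (C₁ t) (H₁ t)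
  set N₂ := N (C₂ t) (H₂ t)
  have ha : |a₁ - a₂| ≤ La * δ :=
    (haL _ _ _ _).trans (mul_le_mul_of_nonneg_left (hδ t ht) hLa)
  have hN : |N₁ - N₂| ≤ LN * δ :=
    (hNL _ _ _ _).trans (mul_le_mul_of_nonneg_left (hδ t ht) (nonneg_of_abs_sub_le_mul_add hNL))
  calc |c₁ * a₁ * S₁ + c₂ * N₁ - (c₁ * a₂ * S₂ + c₂ * N₂)|
      = |c₁ * ((a₁ - a₂) * S₁ + a₂ * (S₁ - S₂)) + c₂ * (N₁ - N₂)| := by ring_nf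
    _ ≤ c₁ * (|a₁ - a₂| * |S₁| + |a₂| * |S₁ - S₂|) + c₂ * |N₁ - N₂| := by
        refine (abs_add_le _ _).trans ?_
        rw [abs_mul, abs_mul, abs_of_nonneg hc₁, abs_of_nonneg hc₂, ← abs_mul, ← abs_mul]
        gcongr
        exact abs_add_le _ _
    _ ≤ c₁ * (La * δ * (L ^ 3 * exp (BN * T) * kF0)
          + Ba * (L ^ 3 * (exp (BN * T) * kF0 * ((LN + La) * δ * T)))) + c₂ * (LN * δ) := by
        gcongr
        exacts [abs_secondMoment_le hL hNB hF₀ ht, haB _ _,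
          abs_secondMoment_sub_le hL hNB haL hNL hF₀ hF₀L hC₁ hH₁ hC₂ hH₂ hδ ht]
    _ = (c₁ * L ^ 3 * exp (BN * T) * kF0 * (La + Ba * (LN + La) * T) + c₂ * LN) * δ := by ring

end Transport

theorem stmt_15_general (T Ba BN La LN kF0 : ℝ)
    (a N : ℝ → ℝ → ℝ)
    (haB : ∀ c h : ℝ, |a c h| ≤ Ba) (hNB : ∀ c h : ℝ, |N c h| ≤ BN)
    (haL : ∀ c₁ h₁ c₂ h₂ : ℝ, |a c₁ h₁ - a c₂ h₂| ≤ La * (|c₁ - c₂| + |h₁ - h₂|))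
    (hNL : ∀ c₁ h₁ c₂ h₂ : ℝ, |N c₁ h₁ - N c₂ h₂| ≤ LN * (|c₁ - c₂| + |h₁ - h₂|))
    (F₀ : ℝ → ℝ)
    (hF0b : ∀ x : ℝ, |F₀ x| ≤ kF0)
    (hF0L : ∀ x y : ℝ, |F₀ x - F₀ y| ≤ kF0 * |x - y|)
    (F : (ℝ → ℝ) → (ℝ → ℝ) → ℝ → ℝ → ℝ)
    (hF : ∀ (C H : ℝ → ℝ) (t x : ℝ), F C H t x =
      Real.exp (∫ s in (0:ℝ)..t, N (C s) (H s)) *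
        F₀ (x - ∫ s in (0:ℝ)..t, a (C s) (H s)))
    (L c₁ c₂ : ℝ) (hL : 0 < L) (hc₁ : 0 ≤ c₁) (hc₂ : 0 ≤ c₂)
    (S : (ℝ → ℝ) → (ℝ → ℝ) → ℝ → ℝ)
    (hS : ∀ (C H : ℝ → ℝ) (t : ℝ), S C H t = ∫ x in (0:ℝ)..L, x ^ 2 * F C H t x)
    (b : (ℝ → ℝ) → (ℝ → ℝ) → ℝ → ℝ)
    (hb : ∀ (C H : ℝ → ℝ) (t : ℝ),
      b C H t = c₁ * a (C t) (H t) * S C H t + c₂ * N (C t) (H t)) :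
    (∀ C H : ℝ → ℝ, ContinuousOn C (Set.Icc 0 T) → ContinuousOn H (Set.Icc 0 T) →
      ∀ t ∈ Set.Icc (0:ℝ) T,
        |b C H t| ≤ c₁ * Ba * (L ^ 3 * Real.exp (BN * T) * kF0) + c₂ * BN) ∧
    (∃ Lb : ℝ, 0 < Lb ∧
      ∀ C₁ H₁ C₂ H₂ : ℝ → ℝ,
        ContinuousOn C₁ (Set.Icc 0 T) → ContinuousOn H₁ (Set.Icc 0 T) →
        ContinuousOn C₂ (Set.Icc 0 T) → ContinuousOn H₂ (Set.Icc 0 T) →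
        ∀ t ∈ Set.Icc (0:ℝ) T,
          |b C₁ H₁ t - b C₂ H₂ t| ≤
            Lb * (sSup ((fun s => |C₁ s - C₂ s|) '' Set.Icc (0:ℝ) T) +
                  sSup ((fun s => |H₁ s - H₂ s|) '' Set.Icc (0:ℝ) T))) := by
  obtain rfl : F = transportSol a N F₀ := by funext C H t x; exact hF C H t x
  obtain rfl : S = secondMoment a N F₀ L := by funext C H t; exact hS C H t
  obtain rfl : b = driftCorrection a N F₀ L c₁ c₂ := by funext C H t; exact hb C H t
  refine ⟨fun C H _ _ t ht => abs_driftCorrection_le hL.le hc₁ hc₂ haB hNB hF0b ht, ?_⟩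
  set K := c₁ * L ^ 3 * exp (BN * T) * kF0 * (La + Ba * (LN + La) * T) + c₂ * LN
  refine ⟨max K 1, lt_max_of_lt_right one_pos, fun C₁ H₁ C₂ H₂ hC₁ hH₁ hC₂ hH₂ t ht => ?_⟩
  have hδ : ∀ s ∈ Icc 0 T, |C₁ s - C₂ s| + |H₁ s - H₂ s| ≤
      sSup ((fun s => |C₁ s - C₂ s|) '' Icc 0 T) + sSup ((fun s => |H₁ s - H₂ s|) '' Icc 0 T) :=
    fun s hs => add_le_add (le_sSup_image_Icc_of_continuousOn (hC₁.sub hC₂).abs hs)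
      (le_sSup_image_Icc_of_continuousOn (hH₁.sub hH₂).abs hs)
  refine (abs_driftCorrection_sub_le hL.le hc₁ hc₂ haB hNB haL hNL hF0b hF0L
    hC₁ hH₁ hC₂ hH₂ hδ ht).trans (mul_le_mul_of_nonneg_right (le_max_left _ _) ?_)
  exact (add_nonneg (abs_nonneg _) (abs_nonneg _)).trans (hδ t ht)

/-- boundedness and Lipschitz dependence of the drift correction
`b(C,H)(t) = c₁·a(C(t),H(t))·S(C,H)(t) + c₂·N(C(t),H(t))`. -/
theorem stmt_15 (T Ba BN La LN kF0 : ℝ) (hT : 0 < T)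
    (a N : ℝ → ℝ → ℝ)
    (haB : ∀ c h : ℝ, |a c h| ≤ Ba) (hNB : ∀ c h : ℝ, |N c h| ≤ BN)
    (haL : ∀ c₁ h₁ c₂ h₂ : ℝ, |a c₁ h₁ - a c₂ h₂| ≤ La * (|c₁ - c₂| + |h₁ - h₂|))
    (hNL : ∀ c₁ h₁ c₂ h₂ : ℝ, |N c₁ h₁ - N c₂ h₂| ≤ LN * (|c₁ - c₂| + |h₁ - h₂|))
    (F₀ : ℝ → ℝ)
    (hF0b : ∀ x : ℝ, |F₀ x| ≤ kF0)
    (hF0L : ∀ x y : ℝ, |F₀ x - F₀ y| ≤ kF0 * |x - y|)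
    (F : (ℝ → ℝ) → (ℝ → ℝ) → ℝ → ℝ → ℝ)
    (hF : ∀ (C H : ℝ → ℝ) (t x : ℝ), F C H t x =
      Real.exp (∫ s in (0:ℝ)..t, N (C s) (H s)) *
        F₀ (x - ∫ s in (0:ℝ)..t, a (C s) (H s)))
    (L c₁ c₂ : ℝ) (hL : 0 < L) (hc₁ : 0 ≤ c₁) (hc₂ : 0 ≤ c₂)
    (S : (ℝ → ℝ) → (ℝ → ℝ) → ℝ → ℝ)
    (hS : ∀ (C H : ℝ → ℝ) (t : ℝ), S C H t = ∫ x in (0:ℝ)..L, x ^ 2 * F C H t x)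
    (b : (ℝ → ℝ) → (ℝ → ℝ) → ℝ → ℝ)
    (hb : ∀ (C H : ℝ → ℝ) (t : ℝ),
      b C H t = c₁ * a (C t) (H t) * S C H t + c₂ * N (C t) (H t)) :
    (∀ C H : ℝ → ℝ, ContinuousOn C (Set.Icc 0 T) → ContinuousOn H (Set.Icc 0 T) →
      ∀ t ∈ Set.Icc (0:ℝ) T,
        |b C H t| ≤ c₁ * Ba * (L ^ 3 * Real.exp (BN * T) * kF0) + c₂ * BN) ∧
    (∃ Lb : ℝ, 0 < Lb ∧
      ∀ C₁ H₁ C₂ H₂ : ℝ → ℝ,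
        ContinuousOn C₁ (Set.Icc 0 T) → ContinuousOn H₁ (Set.Icc 0 T) →
        ContinuousOn C₂ (Set.Icc 0 T) → ContinuousOn H₂ (Set.Icc 0 T) →
        ∀ t ∈ Set.Icc (0:ℝ) T,
          |b C₁ H₁ t - b C₂ H₂ t| ≤
            Lb * (sSup ((fun s => |C₁ s - C₂ s|) '' Set.Icc (0:ℝ) T) +
                  sSup ((fun s => |H₁ s - H₂ s|) '' Set.Icc (0:ℝ) T))) :=
  stmt_15_general T Ba BN La LN kF0 a N haB hNB haL hNL F₀ hF0b hF0L F hF L c₁ c₂ hL hc₁ hc₂ S hS b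
    hb
end
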